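/- arXiv:math-ph/0212054 — 15 statements merged into one kernel-verified Lean document; each statement's English description precedes it below -/
import Mathlib

section
/- Right translation is multiplicative with respect to the left-covariant tensor product: for every h ∈ S and all component functions T₁ (rank r) and T₂ (rank s) as below, R*_h (T₁ ⊗_L T₂) = (R*_h T₁) ⊗_L (R*_h T₂). -/
/-! Conjugation by `h⁻¹` is a group automorphism, so it sends the product `p` of the first `r`
indices to `h⁻¹ p h`; hence it intertwines the twist `k ↦ p k p⁻¹` applied to the last `s`
indices in `⊗_L`. -/

/-- Bicovariance: `S` is closed under conjugation by its elements and their inverses. -/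
def Bicovariant {G : Type*} [Group G] (S : Set G) : Prop :=
  ∀ h ∈ S, ∀ k ∈ S, h * k * h⁻¹ ∈ S ∧ h⁻¹ * k * h ∈ S

/-- The (ordered) product `h₁ h₂ ⋯ h_r` of the entries of a tuple of elements of `S`. -/
def tupleProd {G : Type*} [Group G] {S : Set G} {r : ℕ} (h : Fin r → S) : G :=
  (List.ofFn fun i => ((h i : G))).prod

lemma conj_listProd_mem {G : Type*} [Group G] {S : Set G} (hS : Bicovariant S)
    (L : List G) (hL : ∀ x ∈ L, x ∈ S) {k : G} (hk : k ∈ S) :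
    L.prod * k * L.prod⁻¹ ∈ S := by
  induction L with
  | nil => simpa using hk
  | cons a t ih =>
      have ha : a ∈ S := hL a (by simp)
      have ht : ∀ x ∈ t, x ∈ S := fun x hx => hL x (by simp [hx])
      have h1 : t.prod * k * t.prod⁻¹ ∈ S := ih ht
      have h2 := (hS a ha _ h1).1
      simpa [List.prod_cons, mul_assoc] using h2

lemma conj_tupleProd_mem {G : Type*} [Group G] {S : Set G} (hS : Bicovariant S)
    {r : ℕ} (h : Fin r → S) {k : G} (hk : k ∈ S) :
    tupleProd h * k * (tupleProd h)⁻¹ ∈ S := by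
  refine conj_listProd_mem hS _ ?_ hk
  intro x hx
  obtain ⟨i, rfl⟩ := List.mem_ofFn.mp hx
  exact (h i).2

/-- Conjugation of `k ∈ S` by the product of a tuple of elements of `S`. -/
def conjByProd {G : Type*} [Group G] {S : Set G} (hS : Bicovariant S)
    {r : ℕ} (h : Fin r → S) (k : S) : S :=
  ⟨tupleProd h * (k : G) * (tupleProd h)⁻¹, conj_tupleProd_mem hS h k.2⟩

/-- Left-covariant tensor product of component functions of tensors on the
group lattice `(G,S)`:
`(T₁ ⊗_L T₂)(g)(h₁,…,h_r,k₁,…,k_s) = T₁(g)(h₁,…,h_r) · T₂(g)(p k₁ p⁻¹,…,p k_s p⁻¹)`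
with `p = h₁ ⋯ h_r`. -/
def oL {G : Type*} [Group G] {S : Set G} (hS : Bicovariant S) {r s : ℕ}
    (T₁ : G → (Fin r → S) → ℝ) (T₂ : G → (Fin s → S) → ℝ) :
    G → (Fin (r + s) → S) → ℝ :=
  fun g H =>
    T₁ g (fun i => H (Fin.castAdd s i)) *
      T₂ g (fun j => conjByProd hS (fun i => H (Fin.castAdd s i)) (H (Fin.natAdd r j)))

/-- Right translation of a rank-`r` tensor component function by `h ∈ S`:
`(R*_h T)(g)(k₁,…,k_r) = T(g·h)(h⁻¹k₁h,…,h⁻¹k_rh)`. -/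
def Rstar {G : Type*} [Group G] {S : Set G} (hS : Bicovariant S) (h : S) {r : ℕ}
    (T : G → (Fin r → S) → ℝ) : G → (Fin r → S) → ℝ :=
  fun g k => T (g * h) (fun i => ⟨(h : G)⁻¹ * (k i : G) * h, (hS h h.2 _ (k i).2).2⟩)

section RightTranslation

variable {G : Type*} [Group G] {S : Set G}

def Bicovariant.conjInv (hS : Bicovariant S) (h k : S) : S :=
  ⟨(h : G)⁻¹ * k * h, (hS h h.2 k k.2).2⟩

lemma Rstar_apply (hS : Bicovariant S) (h : S) {r : ℕ} (T : G → (Fin r → S) → ℝ) (g : G)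
    (k : Fin r → S) : Rstar hS h T g k = T (g * h) (hS.conjInv h ∘ k) :=
  rfl

lemma tupleProd_conjInv (hS : Bicovariant S) (h : S) {r : ℕ} (k : Fin r → S) :
    tupleProd (hS.conjInv h ∘ k) = (h : G)⁻¹ * tupleProd k * h := by
  have := map_list_prod (MulAut.conj (h : G)⁻¹) (List.ofFn fun i => (k i : G))
  simpa [tupleProd, List.map_ofFn, Function.comp_def, Bicovariant.conjInv] using this.symm

lemma conjByProd_conjInv (hS : Bicovariant S) (h : S) {r : ℕ} (k : Fin r → S) (x : S) :
    conjByProd hS (hS.conjInv h ∘ k) (hS.conjInv h x) = hS.conjInv h (conjByProd hS k x) := by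
  ext
  simp only [conjByProd, tupleProd_conjInv, Bicovariant.conjInv]
  group

end RightTranslation

/-- Right translation is multiplicative with respect to the left-covariant
tensor product: `R*_h (T₁ ⊗_L T₂) = (R*_h T₁) ⊗_L (R*_h T₂)`. -/
theorem Rstar_oL {G : Type*} [Group G] {S : Set G} (hS : Bicovariant S) (h : S)
    {r s : ℕ} (T₁ : G → (Fin r → S) → ℝ) (T₂ : G → (Fin s → S) → ℝ) :
    Rstar hS h (oL hS T₁ T₂) = oL hS (Rstar hS h T₁) (Rstar hS h T₂) := by
  funext g H
  simp only [Rstar_apply, oL]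
  congr 2
  funext j
  exact conjByProd_conjInv hS h (fun i => H (Fin.castAdd s i)) (H (Fin.natAdd r j))
end

section
/- A linear connection compatible with a metric on a connected group lattice exists if and only if the metric has the same signature at all sites: given a group G, a finite generating subset S ⊆ G with e ∉ S, and a metric 𝔤 : G → Matrix S S ℝ (each 𝔤(g) real symmetric and invertible), there exists a family V : G → S → Matrix S S ℝ of invertible matrices with 𝔤(g·h) = (V g h)ᵀ · 𝔤(g) · (V g h) for all g ∈ G and h ∈ S, if and only if for all g, g' ∈ G the real quadratic forms x ↦ xᵀ 𝔤(g) x and x ↦ xᵀ 𝔤(g') x on ℝ^S are equivalent (i.e., have the same signature, equivalently 𝔤(g') = Cᵀ 𝔤(g) C for some invertible real matrix C). -/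
open Matrix

/-- A linear connection compatible with a metric on a (connected) group lattice
`(G,S)` exists if and only if the metric has the same signature at all sites,
i.e. the quadratic forms of `𝔤 g` and `𝔤 g'` are equivalent for all `g, g'`. -/
theorem exists_compatible_connection_iff
    {G : Type*} [Group G] [DecidableEq G] (S : Set G) [Fintype S]
    (hgen : Subgroup.closure S = ⊤) (he : (1 : G) ∉ S)
    (𝔤 : G → Matrix S S ℝ)
    (hsym : ∀ g, (𝔤 g).IsSymm) (hinv : ∀ g, IsUnit (𝔤 g)) :
    (∃ V : G → S → Matrix S S ℝ, (∀ (g : G) (h : S), IsUnit (V g h)) ∧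
        ∀ (g : G) (h : S), 𝔤 (g * h) = (V g h)ᵀ * 𝔤 g * V g h) ↔
      ∀ g g' : G, ∃ C : Matrix S S ℝ, IsUnit C ∧ 𝔤 g' = Cᵀ * 𝔤 g * C := by
  classical
  set R : G → G → Prop := fun g g' => ∃ C : Matrix S S ℝ, IsUnit C ∧ 𝔤 g' = Cᵀ * 𝔤 g * C
    with hRdef
  have hrefl : ∀ g, R g g := fun g => ⟨1, isUnit_one, by simp⟩
  have hsymmR : ∀ {g g'}, R g g' → R g' g := by
    rintro g g' ⟨C, hC, hgC⟩
    have hdet : IsUnit C.det := (Matrix.isUnit_iff_isUnit_det C).mp hC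
    refine ⟨C⁻¹, ?_, ?_⟩
    · exact (Matrix.isUnit_nonsing_inv_iff).mpr hC
    · rw [hgC, Matrix.transpose_nonsing_inv]
      symm
      calc (Cᵀ)⁻¹ * (Cᵀ * 𝔤 g * C) * C⁻¹
          = ((Cᵀ)⁻¹ * Cᵀ) * 𝔤 g * (C * C⁻¹) := by
            simp only [Matrix.mul_assoc]
        _ = 𝔤 g := by
            rw [Matrix.nonsing_inv_mul _ (by rwa [Matrix.det_transpose] : IsUnit Cᵀ.det),
              Matrix.mul_nonsing_inv _ hdet, Matrix.one_mul, Matrix.mul_one]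
  have htrans : ∀ {g g' g''}, R g g' → R g' g'' → R g g'' := by
    rintro g g' g'' ⟨C, hC, hgC⟩ ⟨D, hD, hgD⟩
    exact ⟨C * D, hC.mul hD, by
      rw [hgD, hgC, Matrix.transpose_mul]
      simp only [Matrix.mul_assoc]⟩
  constructor
  · rintro ⟨V, hVu, hVc⟩ g g'
    have key : ∀ x : G, ∀ a : G, R a (a * x) := by
      intro x
      have hx : x ∈ Subgroup.closure S := hgen ▸ Subgroup.mem_top x
      induction hx using Subgroup.closure_induction with
      | mem y hy =>
          intro a
          exact ⟨V a ⟨y, hy⟩, hVu a ⟨y, hy⟩, by simpa using hVc a ⟨y, hy⟩⟩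
      | one => intro a; simpa using hrefl a
      | mul y z hy hz ihy ihz =>
          intro a
          have h1 := ihy a
          have h2 := ihz (a * y)
          rw [mul_assoc] at *
          exact htrans h1 h2
      | inv y hy ihy =>
          intro a
          have := ihy (a * y⁻¹)
          simp only [inv_mul_cancel_right, mul_inv_cancel_right] at this ⊢
          exact hsymmR this
    exact htrans (hsymmR (by simpa using key g 1)) (by simpa using key g' 1)
  · intro H
    exact ⟨fun g h => (H g (g * h)).choose,
      fun g h => (H g (g * h)).choose_spec.1,
      fun g h => (H g (g * h)).choose_spec.2⟩
end

section
/- Vanishing biangle torsion together with metric-compatibility implies symmetry of the squared distance: let h₁, h₂ ∈ S with h₁·h₂ = e (a biangle), g ∈ G, and suppose the connection is compatible with the metric at (g,h₁), i.e. 𝔤(g·h₁) = (V g h₁)ᵀ · 𝔤(g) · (V g h₁), and that the biangle torsion vanishes, i.e. the h₂-column of V g h₁ equals −e_{h₁}. Then 𝔤(g·h₁)_{h₂,h₂} = 𝔤(g)_{h₁,h₁}. -/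
open Matrix

/-- Vanishing biangle torsion together with metric-compatibility implies that
the squared distance from `g` to `g·h₁` equals the reverse squared distance:
`𝔤(g·h₁)_{h₂,h₂} = 𝔤(g)_{h₁,h₁}` for a biangle `h₁·h₂ = e`. -/
theorem biangle_torsionFree_symmetric_distance
    {G : Type*} [Group G] [DecidableEq G] (S : Set G) [Fintype S]
    (he : (1 : G) ∉ S)
    (𝔤 : G → Matrix S S ℝ) (hsym : ∀ g, (𝔤 g).IsSymm) (hinv : ∀ g, IsUnit (𝔤 g))
    (V : G → S → Matrix S S ℝ)
    (h₁ h₂ : S) (hbi : (h₁ : G) * (h₂ : G) = 1) (g : G)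
    (hcompat : 𝔤 (g * h₁) = (V g h₁)ᵀ * 𝔤 g * V g h₁)
    (htor : ∀ h : S, V g h₁ h h₂ = -(if h = h₁ then 1 else 0)) :
    𝔤 (g * h₁) h₂ h₂ = 𝔤 g h₁ h₁ := by
  rw [hcompat]
  simp [Matrix.mul_apply, Matrix.transpose_apply, htor, mul_ite, ite_mul,
    Finset.sum_ite_eq', Finset.sum_ite_eq]
end

section
/- Vanishing triangle torsion together with metric-compatibility yields the Euclidean cosine law of triangles: let h₀, h₁, h₂ ∈ S with h₁·h₂ = h₀ (a triangle), g ∈ G, suppose 𝔤(g·h₁) = (V g h₁)ᵀ · 𝔤(g) · (V g h₁), and suppose the triangle torsion vanishes, i.e. the h₂-column of V g h₁ equals e_{h₀} − e_{h₁}. Then 𝔤(g·h₁)_{h₂,h₂} = 𝔤(g)_{h₁,h₁} + 𝔤(g)_{h₀,h₀} − 2·𝔤(g)_{h₀,h₁}. -/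
open Matrix

/-- Vanishing triangle torsion together with metric-compatibility yields the
Euclidean cosine law of triangles:
`𝔤(g·h₁)_{h₂,h₂} = 𝔤(g)_{h₁,h₁} + 𝔤(g)_{h₀,h₀} − 2 𝔤(g)_{h₀,h₁}`
for a triangle `h₁·h₂ = h₀ ∈ S`. -/
theorem triangle_torsionFree_cosine_law
    {G : Type*} [Group G] [DecidableEq G] (S : Set G) [Fintype S]
    (he : (1 : G) ∉ S)
    (𝔤 : G → Matrix S S ℝ) (hsym : ∀ g, (𝔤 g).IsSymm) (hinv : ∀ g, IsUnit (𝔤 g))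
    (V : G → S → Matrix S S ℝ)
    (h₀ h₁ h₂ : S) (htri : (h₁ : G) * (h₂ : G) = (h₀ : G)) (g : G)
    (hcompat : 𝔤 (g * h₁) = (V g h₁)ᵀ * 𝔤 g * V g h₁)
    (htor : ∀ h : S, V g h₁ h h₂ =
      (if h = h₀ then 1 else 0) - (if h = h₁ then 1 else 0)) :
    𝔤 (g * h₁) h₂ h₂ = 𝔤 g h₁ h₁ + 𝔤 g h₀ h₀ - 2 * 𝔤 g h₀ h₁ := by
  have hs : 𝔤 g h₁ h₀ = 𝔤 g h₀ h₁ := by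
    conv_lhs => rw [← (hsym g)]
    rfl
  rw [hcompat]
  simp only [Matrix.mul_apply, Matrix.transpose_apply, htor, sub_mul, mul_sub, ite_mul, one_mul,
    zero_mul, mul_ite, mul_one, mul_zero, Finset.sum_sub_distrib, Finset.sum_ite_eq',
    Finset.mem_univ, if_true]
  rw [hs]; ring
end

section
/- Vanishing quadrangle torsion restricts a positive-definite metric by triangle inequalities: let h₁, h₂, ĥ₁, ĥ₂ ∈ S with h₁·h₂ = ĥ₁·ĥ₂ (a quadrangle), g ∈ G; assume 𝔤(g) is symmetric positive definite, that 𝔤(g·h₁) = (V g h₁)ᵀ·𝔤(g)·(V g h₁) and 𝔤(g·ĥ₁) = (V g ĥ₁)ᵀ·𝔤(g)·(V g ĥ₁), and that the quadrangle torsion vanishes, i.e. (V g h₁)·e_{h₂} − (V g ĥ₁)·e_{ĥ₂} = e_{ĥ₁} − e_{h₁}. Then |√(𝔤(g·h₁)_{h₂,h₂}) − √(𝔤(g·ĥ₁)_{ĥ₂,ĥ₂})| ≤ √(𝔤(g)_{h₁,h₁} + 𝔤(g)_{ĥ₁,ĥ₁} − 2·𝔤(g)_{h₁,ĥ₁}) ≤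 √(𝔤(g·h₁)_{h₂,h₂}) + √(𝔤(g·ĥ₁)_{ĥ₂,ĥ₂}). -/
/-!
Transport by `V g h₁` and `V g ĥ₁` is an isometry, so the two square roots on the outside are the
`𝔤(g)`-lengths of the transported vectors `x` and `y`, while vanishing torsion says
`x - y = e_{ĥ₁} - e_{h₁}`, whose length is the middle term. Both inequalities are then the
triangle inequality for the (semi)norm `z ↦ √(zᵀ 𝔤(g) z)`.
-/

open Matrix

namespace Matrix

variable {n : Type*} [Fintype n]

lemma PosSemidef.sqrt_dotProduct_mulVec_self_eq_norm {M : Matrix n n ℝ} (hM : M.PosSemidef)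
    (z : n → ℝ) :
    √(z ⬝ᵥ M *ᵥ z) = @norm _ (M.toSeminormedAddCommGroup hM).toNorm z := by
  rw [dotProduct_comm]
  rfl

lemma PosSemidef.abs_sub_sqrt_dotProduct_mulVec_le {M : Matrix n n ℝ} (hM : M.PosSemidef)
    (x y : n → ℝ) :
    |√(x ⬝ᵥ M *ᵥ x) - √(y ⬝ᵥ M *ᵥ y)| ≤ √((x - y) ⬝ᵥ M *ᵥ (x - y)) := by
  simpa only [← hM.sqrt_dotProduct_mulVec_self_eq_norm] using
    @abs_norm_sub_norm_le _ (M.toSeminormedAddCommGroup hM) x y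

lemma PosSemidef.sqrt_dotProduct_mulVec_sub_le {M : Matrix n n ℝ} (hM : M.PosSemidef)
    (x y : n → ℝ) :
    √((x - y) ⬝ᵥ M *ᵥ (x - y)) ≤ √(x ⬝ᵥ M *ᵥ x) + √(y ⬝ᵥ M *ᵥ y) := by
  simpa only [← hM.sqrt_dotProduct_mulVec_self_eq_norm] using
    @norm_sub_le _ (M.toSeminormedAddCommGroup hM).toSeminormedAddGroup x y

lemma single_sub_single_dotProduct_mulVec [DecidableEq n] {M : Matrix n n ℝ} (hM : M.IsHermitian)
    (i j : n) :
    (Pi.single i 1 - Pi.single j 1) ⬝ᵥ M *ᵥ (Pi.single i 1 - Pi.single j 1) =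
      M i i + M j j - 2 * M i j := by
  have hji : M j i = M i j := by simpa using hM.apply i j
  simp only [sub_dotProduct, mulVec_sub, dotProduct_sub, single_one_dotProduct,
    mulVec_single_one, col_apply, hji]
  ring

end Matrix

-- `k₁, k₂` stand for `ĥ₁, ĥ₂`.
theorem quadrangle_torsionFree_triangle_inequalities_general
    {G : Type*} [Group G] [DecidableEq G] (S : Set G) [Fintype S]
    (𝔤 : G → Matrix S S ℝ)
    (V : G → S → Matrix S S ℝ)
    (h₁ h₂ k₁ k₂ : S) (g : G)
    (hpos : (𝔤 g).PosDef)
    (hc1 : 𝔤 (g * h₁) = (V g h₁)ᵀ * 𝔤 g * V g h₁)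
    (hc2 : 𝔤 (g * k₁) = (V g k₁)ᵀ * 𝔤 g * V g k₁)
    (htor : ∀ h : S, V g h₁ h h₂ - V g k₁ h k₂ =
      (if h = k₁ then 1 else 0) - (if h = h₁ then 1 else 0)) :
    |Real.sqrt (𝔤 (g * h₁) h₂ h₂) - Real.sqrt (𝔤 (g * k₁) k₂ k₂)| ≤
        Real.sqrt (𝔤 g h₁ h₁ + 𝔤 g k₁ k₁ - 2 * 𝔤 g h₁ k₁) ∧
      Real.sqrt (𝔤 g h₁ h₁ + 𝔤 g k₁ k₁ - 2 * 𝔤 g h₁ k₁) ≤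
        Real.sqrt (𝔤 (g * h₁) h₂ h₂) + Real.sqrt (𝔤 (g * k₁) k₂ k₂) := by
  set x : S → ℝ := fun h => V g h₁ h h₂
  set y : S → ℝ := fun h => V g k₁ h k₂
  have hx : 𝔤 (g * h₁) h₂ h₂ = x ⬝ᵥ 𝔤 g *ᵥ x := by rw [hc1, mul_mul_apply]; rfl
  have hy : 𝔤 (g * k₁) k₂ k₂ = y ⬝ᵥ 𝔤 g *ᵥ y := by rw [hc2, mul_mul_apply]; rfl
  have hyx : y - x = Pi.single h₁ 1 - Pi.single k₁ 1 := by
    funext h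
    have := htor h
    simp only [Pi.sub_apply, Pi.single_apply, x, y] at this ⊢
    linarith
  have hmid : 𝔤 g h₁ h₁ + 𝔤 g k₁ k₁ - 2 * 𝔤 g h₁ k₁ = (y - x) ⬝ᵥ 𝔤 g *ᵥ (y - x) := by
    rw [hyx, single_sub_single_dotProduct_mulVec hpos.isHermitian]
  rw [hx, hy, hmid, abs_sub_comm, add_comm]
  exact ⟨hpos.posSemidef.abs_sub_sqrt_dotProduct_mulVec_le y x,
    hpos.posSemidef.sqrt_dotProduct_mulVec_sub_le y x⟩

/-- Vanishing quadrangle torsion restricts a positive definite metric by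
triangle inequalities:
`|√𝔤(g·h₁)_{h₂,h₂} − √𝔤(g·ĥ₁)_{ĥ₂,ĥ₂}| ≤ √(𝔤(g)_{h₁,h₁}+𝔤(g)_{ĥ₁,ĥ₁}−2𝔤(g)_{h₁,ĥ₁})
 ≤ √𝔤(g·h₁)_{h₂,h₂} + √𝔤(g·ĥ₁)_{ĥ₂,ĥ₂}`
for a quadrangle `h₁·h₂ = ĥ₁·ĥ₂` (here `k₁, k₂` play the role of `ĥ₁, ĥ₂`). -/
theorem quadrangle_torsionFree_triangle_inequalities
    {G : Type*} [Group G] [DecidableEq G] (S : Set G) [Fintype S]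
    (he : (1 : G) ∉ S)
    (𝔤 : G → Matrix S S ℝ)
    (V : G → S → Matrix S S ℝ)
    (h₁ h₂ k₁ k₂ : S) (hquad : (h₁ : G) * (h₂ : G) = (k₁ : G) * (k₂ : G)) (g : G)
    (hpos : (𝔤 g).PosDef)
    (hc1 : 𝔤 (g * h₁) = (V g h₁)ᵀ * 𝔤 g * V g h₁)
    (hc2 : 𝔤 (g * k₁) = (V g k₁)ᵀ * 𝔤 g * V g k₁)
    (htor : ∀ h : S, V g h₁ h h₂ - V g k₁ h k₂ =
      (if h = k₁ then 1 else 0) - (if h = h₁ then 1 else 0)) :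
    |Real.sqrt (𝔤 (g * h₁) h₂ h₂) - Real.sqrt (𝔤 (g * k₁) k₂ k₂)| ≤
        Real.sqrt (𝔤 g h₁ h₁ + 𝔤 g k₁ k₁ - 2 * 𝔤 g h₁ k₁) ∧
      Real.sqrt (𝔤 g h₁ h₁ + 𝔤 g k₁ k₁ - 2 * 𝔤 g h₁ k₁) ≤
        Real.sqrt (𝔤 (g * h₁) h₂ h₂) + Real.sqrt (𝔤 (g * k₁) k₂ k₂) :=
  quadrangle_torsionFree_triangle_inequalities_general S 𝔤 V h₁ h₂ k₁ k₂ g hpos hc1 hc2 htor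
end

section
/- On a maximal group lattice the unique torsion-free linear connection furnishes a matrix representation, hence is flat: let G be a group and S = G \ {e}; define for each a ∈ S the constant matrix V_a ∈ Matrix S S ℝ by (V_a)_{h,m} = (if a·m ≠ e and h = a·m then 1 else 0) − (if h = a then 1 else 0). Then V_a · V_{a⁻¹} equals the identity matrix for every a ∈ S, and V_a · V_b = V_{a·b} for all a, b ∈ S with a·b ≠ e. In particular V_{h₁} · V_{h₁⁻¹ h₂ h₁} = V_{h₂ h₁} whenever h₂·h₁ ≠ e, so all biangle and triangle curvature components of this connection vanish. -/
open Matrix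

/-- The unique torsion-free linear connection on the maximal group lattice
`(G, G \ {e})`: `(V_a)_{h,m} = (if a·m ≠ e ∧ h = a·m then 1 else 0) − (if h = a then 1 else 0)`. -/
def maxV {G : Type*} [Group G] [Fintype G] [DecidableEq G]
    (a : {g : G // g ≠ 1}) : Matrix {g : G // g ≠ 1} {g : G // g ≠ 1} ℝ :=
  fun h m => (if (a : G) * (m : G) ≠ 1 ∧ (h : G) = (a : G) * (m : G) then 1 else 0)
    - (if h = a then 1 else 0)

section Aux

variable {G : Type*} [Group G] [Fintype G] [DecidableEq G]

lemma sum_coe_eq (f : G → ℝ) (v : G) :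
    ∑ k : {g : G // g ≠ 1}, (if (k : G) = v then f k else 0)
      = if v = 1 then 0 else f v := by
  classical
  rw [← Finset.sum_subtype (Finset.univ.filter (· ≠ 1))
      (by simp) (fun g : G => if g = v then f g else 0)]
  rw [Finset.sum_ite_eq']
  simp [eq_comm]

lemma maxV_apply (a h m : {g : G // g ≠ 1}) :
    maxV a h m = (if (h : G) = (a : G) * m then 1 else 0)
      - (if h = a then 1 else 0) := by
  unfold maxV
  congr 1
  by_cases hh : (h : G) = (a : G) * m
  · simp [hh, (hh ▸ h.2 : (a : G) * m ≠ 1)]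
  · simp [hh]

lemma maxV_mul_apply (a b h m : {g : G // g ≠ 1}) :
    (maxV a * maxV b) h m =
      (if (b : G) * m = 1 then 0 else if (h : G) = (a : G) * ((b : G) * m) then 1 else 0)
      - (if (h : G) = (a : G) * b then 1 else 0)
      - (if h = a then 1 else 0) * (if (b : G) * m = 1 then 0 else 1)
      + (if h = a then 1 else 0) := by
  rw [Matrix.mul_apply]
  have step : ∀ k : {g : G // g ≠ 1}, maxV a h k * maxV b k m =
      (if (k : G) = (b : G) * m then (if (h : G) = (a : G) * k then 1 else 0) else 0)
      - (if (k : G) = (b : G) then (if (h : G) = (a : G) * k then 1 else 0) else 0)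
      - (if (k : G) = (b : G) * m then (if h = a then 1 else 0) else 0)
      + (if (k : G) = (b : G) then (if h = a then 1 else 0) else 0) := by
    intro k
    rw [maxV_apply, maxV_apply]
    by_cases h1 : (k : G) = (b : G) * m <;> by_cases h2 : (k : G) = (b : G) <;>
      simp [h1, h2, Subtype.ext_iff, m.2] <;> ring
  rw [Finset.sum_congr rfl (fun k _ => step k)]
  rw [Finset.sum_add_distrib, Finset.sum_sub_distrib, Finset.sum_sub_distrib,
    sum_coe_eq (fun g => if (h : G) = (a : G) * g then 1 else 0),
    sum_coe_eq (fun g => if (h : G) = (a : G) * g then 1 else 0),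
    sum_coe_eq (fun _ => if h = a then 1 else 0),
    sum_coe_eq (fun _ => if h = a then 1 else 0)]
  simp [b.2]

end Aux


lemma maxV_mul_maxV {G : Type*} [Group G] [Fintype G] [DecidableEq G]
    (a b c : {g : G // g ≠ 1}) (hc : (c : G) = (a : G) * (b : G)) :
    maxV a * maxV b = maxV c := by
  ext h m
  rw [maxV_mul_apply, maxV_apply]
  by_cases hbm : (b : G) * m = 1
  · have hm : (m : G) = (b : G)⁻¹ := eq_inv_of_mul_eq_one_right hbm
    simp [hbm, hc, Subtype.ext_iff, mul_assoc, hm]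
    ring
  · simp [hbm, hc, Subtype.ext_iff, mul_assoc]

/-- On a maximal group lattice the unique torsion-free linear connection
furnishes a matrix representation, hence is flat: `V_a · V_{a⁻¹} = 1`,
`V_a · V_b = V_{a·b}` whenever `a·b ≠ e`, and in particular
`V_{h₁} · V_{h₁⁻¹h₂h₁} = V_{h₂h₁}` whenever `h₂·h₁ ≠ e`, so all biangle and
triangle curvature components vanish. -/
theorem maximal_lattice_torsionFree_connection_flat
    {G : Type*} [Group G] [Fintype G] [DecidableEq G] :
    (∀ a b : {g : G // g ≠ 1}, (b : G) = (a : G)⁻¹ → maxV a * maxV b = 1) ∧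
    (∀ a b c : {g : G // g ≠ 1}, (c : G) = (a : G) * (b : G) →
      maxV a * maxV b = maxV c) ∧
    (∀ h₁ h₂ c d : {g : G // g ≠ 1},
      (c : G) = (h₁ : G)⁻¹ * (h₂ : G) * (h₁ : G) → (d : G) = (h₂ : G) * (h₁ : G) →
        maxV h₁ * maxV c = maxV d) := by
  refine ⟨?_, fun a b c hc => maxV_mul_maxV a b c hc, ?_⟩
  · intro a b hb
    ext h m
    rw [maxV_mul_apply, Matrix.one_apply]
    by_cases hm : (m : G) = (a : G)
    · have hbm : (b : G) * m = 1 := by rw [hb, hm, inv_mul_cancel]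
      have hma : m = a := Subtype.ext hm
      simp [hbm, hb, hma, h.2]
    · have hbm : (b : G) * m ≠ 1 := by
        rw [hb]; intro hh
        exact hm (by simpa using congrArg ((a : G) * ·) hh)
      have hbm' : ((a : G))⁻¹ * m ≠ 1 := hb ▸ hbm
      simp [hbm, hbm', hb, Subtype.ext_iff, h.2]
  · intro h₁ h₂ c d hc hd
    exact maxV_mul_maxV h₁ c d (by rw [hd, hc]; group)
end

section
/- On the maximal group lattice (ℤ₃, {1,2}), a constant metric is compatible with the unique torsion-free linear connection precisely when it describes a regular Euclidean triangle: for real numbers a, b, c, setting 𝔤 = !![a, b; b, c], V₁ = !![-1, -1; 1, 0] and V₂ = !![0, 1; -1, -1] (rows and columns indexed by S = {1,2}), one has (V₁ᵀ · 𝔤 · V₁ = 𝔤 and V₂ᵀ · 𝔤 · V₂ = 𝔤) if and only if b = a/2 and c = a. -/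
open Matrix

/-- On the maximal group lattice `(ℤ₃, {1,2})`, a constant metric
`𝔤 = !![a,b;b,c]` is compatible with the unique torsion-free linear connection
(`V₁ = !![-1,-1;1,0]`, `V₂ = !![0,1;-1,-1]`) precisely when it describes a
regular Euclidean triangle, i.e. `b = a/2` and `c = a`. -/
theorem z3_maximal_constant_metric_iff_regular_triangle (a b c : ℝ) :
    ((!![(-1 : ℝ), -1; 1, 0])ᵀ * !![a, b; b, c] * !![(-1 : ℝ), -1; 1, 0] = !![a, b; b, c] ∧
        (!![(0 : ℝ), 1; -1, -1])ᵀ * !![a, b; b, c] * !![(0 : ℝ), 1; -1, -1] = !![a, b; b, c]) ↔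
      (b = a / 2 ∧ c = a) := by
  simp only [← Matrix.ext_iff, Fin.forall_fin_two, Matrix.mul_apply, Fin.sum_univ_two,
    Matrix.transpose_apply]
  norm_num [Matrix.cons_val_zero, Matrix.cons_val_one, Matrix.head_cons]
  constructor
  · rintro ⟨⟨⟨h1, h2⟩, h3, h4⟩, ⟨h5, h6⟩, h7, h8⟩
    constructor <;> linarith
  · rintro ⟨rfl, rfl⟩
    refine ⟨⟨⟨?_, ?_⟩, ?_, ?_⟩, ⟨?_, ?_⟩, ?_, ?_⟩ <;> ring
end

section
/- On the maximal group lattice (ℤ₄, {1,2,3}), a constant symmetric metric 𝔤 ∈ Matrix (Fin 3) (Fin 3) ℝ is compatible with the unique torsion-free linear connection, i.e. V_hᵀ · 𝔤 · V_h = 𝔤 for h = 1, 2, 3 with V₁ = !![-1,-1,-1; 1,0,0; 0,1,0], V₂ = !![0,0,1; -1,-1,-1; 1,0,0], V₃ = !![0,1,0; 0,0,1; -1,-1,-1], if and only if there exist real numbers a, b with 𝔤 = !![a, b, a-b; b, 2*b, b; a-b, b, a]. -/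
open Matrix

/-- On the maximal group lattice `(ℤ₄, {1,2,3})`, a constant symmetric metric is
compatible with the unique torsion-free linear connection if and only if it is
of the form `!![a, b, a-b; b, 2b, b; a-b, b, a]`. -/
theorem z4_maximal_constant_metric_iff
    (𝔤 : Matrix (Fin 3) (Fin 3) ℝ) (hsym : 𝔤.IsSymm) (hinv : IsUnit 𝔤) :
    ((!![(-1 : ℝ), -1, -1; 1, 0, 0; 0, 1, 0])ᵀ * 𝔤 * !![(-1 : ℝ), -1, -1; 1, 0, 0; 0, 1, 0] = 𝔤 ∧
      (!![(0 : ℝ), 0, 1; -1, -1, -1; 1, 0, 0])ᵀ * 𝔤 * !![(0 : ℝ), 0, 1; -1, -1, -1; 1, 0, 0] = 𝔤 ∧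
      (!![(0 : ℝ), 1, 0; 0, 0, 1; -1, -1, -1])ᵀ * 𝔤 * !![(0 : ℝ), 1, 0; 0, 0, 1; -1, -1, -1] = 𝔤) ↔
    ∃ a b : ℝ, 𝔤 = !![a, b, a - b; b, 2 * b, b; a - b, b, a] := by
  constructor
  · rintro ⟨h1, h2, h3⟩
    refine ⟨𝔤 0 0, 𝔤 0 1, ?_⟩
    have s01 : 𝔤 1 0 = 𝔤 0 1 := by
      have := congrFun (congrFun hsym.symm 1) 0; simpa [Matrix.transpose_apply] using this
    have s02 : 𝔤 2 0 = 𝔤 0 2 := by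
      have := congrFun (congrFun hsym.symm 2) 0; simpa [Matrix.transpose_apply] using this
    have s12 : 𝔤 2 1 = 𝔤 1 2 := by
      have := congrFun (congrFun hsym.symm 2) 1; simpa [Matrix.transpose_apply] using this
    have t1 : (!![(-1 : ℝ), -1, -1; 1, 0, 0; 0, 1, 0])ᵀ = !![-1, 1, 0; -1, 0, 1; -1, 0, 0] := by
      ext i j; fin_cases i <;> fin_cases j <;> rfl
    have t2 : (!![(0 : ℝ), 0, 1; -1, -1, -1; 1, 0, 0])ᵀ = !![0, -1, 1; 0, -1, 0; 1, -1, 0] := by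
      ext i j; fin_cases i <;> fin_cases j <;> rfl
    have t3 : (!![(0 : ℝ), 1, 0; 0, 0, 1; -1, -1, -1])ᵀ = !![0, 0, -1; 1, 0, -1; 0, 1, -1] := by
      ext i j; fin_cases i <;> fin_cases j <;> rfl
    rw [t1] at h1; rw [t2] at h2; rw [t3] at h3
    have q1 := fun i j => congrFun (congrFun h1 i) j
    have q2 := fun i j => congrFun (congrFun h2 i) j
    have q3 := fun i j => congrFun (congrFun h3 i) j
    have a00 := q1 0 0; have a01 := q1 0 1; have a02 := q1 0 2
    have a11 := q1 1 1; have a12 := q1 1 2; have a22 := q1 2 2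
    have b00 := q2 0 0; have b01 := q2 0 1; have b02 := q2 0 2
    have b11 := q2 1 1; have b12 := q2 1 2; have b22 := q2 2 2
    have c00 := q3 0 0; have c01 := q3 0 1; have c02 := q3 0 2
    have c11 := q3 1 1; have c12 := q3 1 2; have c22 := q3 2 2
    simp [Matrix.mul_apply, Matrix.vecMul, dotProduct, Fin.sum_univ_three,
      Matrix.vecHead, Matrix.vecTail] at a00 a01 a02 a11 a12 a22 b00 b01 b02 b11 b12 b22 c00 c01 c02 c11 c12 c22
    ext i j
    fin_cases i <;> fin_cases j <;> simp <;>
      linarith [a00, a01, a02, a11, a12, a22, b00, b01, b02, b12, b22,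
        c00, c01, c02, c11, c12, c22, s01, s02, s12]
  · rintro ⟨a, b, rfl⟩
    refine ⟨?_, ?_, ?_⟩ <;>
      · ext i j
        fin_cases i <;> fin_cases j <;>
          simp [Matrix.mul_apply, Fin.sum_univ_three, Matrix.vecHead, Matrix.vecTail] <;> ring
end

section
/- Every Levi-Civita connection on the group lattice (ℤ₄, {1,2}) is flat: let p, q : ℤ₄ → ℝ, define V₁(g) = !![-1, p(g); 1, 1 + q(g)] and V₂(g) = !![1 + p(g), 0; q(g), -1] (the general torsion-free form of the transport matrices), and let 𝔤 : ℤ₄ → Matrix (Fin 2) (Fin 2) ℝ be a metric (each 𝔤(g) symmetric and invertible) satisfying the compatibility conditions 𝔤(g+1) = V₁(g)ᵀ · 𝔤(g) · V₁(g) and 𝔤(g+2) = V₂(g)ᵀ · 𝔤(g) · V₂(g) for all g ∈ ℤ₄. Then the curvature vanishes: for all g ∈ ℤ₄, V₂(g) · V₂(g+2) = 1 (biangle curvature), V₁(g) · V₁(g+1) = V₂(g) (triangle curvature), and V₁(g) · V₂(g+1) = V₂(g) · V₁(g+2) (quadrangle curvature). -/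
open Matrix

/-- The general torsion-free transport matrix `V₁` on `(ℤ₄, {1,2})`. -/
def z4V₁ (p q : ZMod 4 → ℝ) (g : ZMod 4) : Matrix (Fin 2) (Fin 2) ℝ :=
  !![-1, p g; 1, 1 + q g]

/-- The general torsion-free transport matrix `V₂` on `(ℤ₄, {1,2})`. -/
def z4V₂ (p q : ZMod 4 → ℝ) (g : ZMod 4) : Matrix (Fin 2) (Fin 2) ℝ :=
  !![1 + p g, 0; q g, -1]

private lemma biangleAux (p0 q0 p2 q2 a0 b0 c0 a2 b2 c2 c1 c3 : ℝ)
    (h20a : a2 = a0*(1+p0)^2 + 2*b0*(1+p0)*q0 + c0*q0^2)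
    (h20b : b2 = -(b0*(1+p0) + c0*q0))
    (h20c : c2 = c0)
    (h22a : a0 = a2*(1+p2)^2 + 2*b2*(1+p2)*q2 + c2*q2^2)
    (h22b : b0 = -(b2*(1+p2) + c2*q2))
    (hc1 : c1 = a0*p0^2 + 2*b0*p0*(1+q0) + c0*(1+q0)^2)
    (hc3 : c3 = a2*p2^2 + 2*b2*p2*(1+q2) + c2*(1+q2)^2)
    (hcc : c3 = c1)
    (hD0 : a0*c0 - b0^2 ≠ 0) :
    (1+p0)*(1+p2) = 1 ∧ q0*(1+p2) = q2 := by
  have hG1 : b0*(1-(1+p0)*(1+p2)) = c0*(q0*(1+p2)-q2) := by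
    linear_combination h22b - (1+p2)*h20b - q2*h20c
  have hG2 : a0 = a0*((1+p0)*(1+p2))^2 + 2*b0*((1+p0)*(1+p2))*(q0*(1+p2)-q2)
      + c0*(q0*(1+p2)-q2)^2 := by
    linear_combination h22a + (1+p2)^2*h20a + (2*(1+p2)*q2)*h20b + q2^2*h20c
  have hT1 : (a0*c0 - b0^2)*(((1+p0)*(1+p2))^2 - 1) = 0 := by
    linear_combination (-c0)*hG2 + (b0*(1+(1+p0)*(1+p2)) + c0*(q0*(1+p2)-q2))*hG1
  have hu2 : ((1+p0)*(1+p2))^2 - 1 = 0 := by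
    rcases mul_eq_zero.1 hT1 with h | h
    · exact absurd h hD0
    · exact h
  have hu : (1+p0)*(1+p2) = 1 ∨ (1+p0)*(1+p2) = -1 := by
    have h4 : ((1+p0)*(1+p2) - 1) * ((1+p0)*(1+p2) + 1) = 0 := by linear_combination hu2
    rcases mul_eq_zero.1 h4 with h | h
    · exact Or.inl (by linarith)
    · exact Or.inr (by linarith)
  rcases hu with hu | hu
  · refine ⟨hu, ?_⟩
    have hcv : c0*(q0*(1+p2)-q2) = 0 := by linear_combination (-1)*hG1 - b0*hu
    have hbv : b0*(q0*(1+p2)-q2) = 0 := by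
      linear_combination (-1/2)*hG2
        - (1/2)*(a0*((1+p0)*(1+p2)+1) + 2*b0*(q0*(1+p2)-q2))*hu
        - (1/2)*(q0*(1+p2)-q2)*hcv
    by_contra hne
    have hvne : q0*(1+p2) - q2 ≠ 0 := fun h => hne (by linarith)
    have hb0 : b0 = 0 := by
      rcases mul_eq_zero.1 hbv with h | h
      · exact h
      · exact absurd h hvne
    have hc0 : c0 = 0 := by
      rcases mul_eq_zero.1 hcv with h | h
      · exact h
      · exact absurd h hvne
    exact hD0 (by rw [hb0, hc0]; ring)
  · exfalso
    have hv2 : c0*(q0*(1+p2)-q2) = 2*b0 := by linear_combination (-1)*hG1 - b0*hu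
    by_cases hc0 : c0 = 0
    · have hb0 : b0 = 0 := by
        rw [hc0] at hv2
        linarith [hv2]
      exact hD0 (by rw [hb0, hc0]; ring)
    · have hp0 : (1+p0) ≠ 0 := by
        intro h
        rw [h, zero_mul] at hu
        norm_num at hu
      have hkey : (4*(1+p0))*(a0*c0-b0^2) = (4*(1+p0))*0 := by
        linear_combination c0*hc1 - c0*hc3 + c0*hcc - c0*p2^2*h20a
          - (2*c0*p2*q2+2*c0*p2)*h20b - c0*(q2^2+2*q2+1)*h20c
          + (-(p0*p2*a0*c0) - 2*q0*p2*b0*c0 + p0*a0*c0 - p2*a0*c0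
             + 2*q2*b0*c0 + 2*a0*c0 + 2*b0*c0)*hu
          + (-(q0*p2*c0) + 2*p0*b0 + q0*c0 + q2*c0 + 2*b0 + 2*c0)*hv2
      have h4ne : (4*(1+p0) : ℝ) ≠ 0 := by
        intro h
        exact hp0 (by linarith)
      exact hD0 (by simpa using mul_left_cancel₀ h4ne hkey)

private lemma deltaV1 (p0 q0 a0 b0 c0 a1 b1 c1 : ℝ)
    (h1a : a1 = a0 - 2*b0 + c0)
    (h1b : b1 = p0*(b0-a0) + (1+q0)*(c0-b0))
    (h1c : c1 = a0*p0^2 + 2*b0*p0*(1+q0) + c0*(1+q0)^2) :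
    a1*c1 - b1^2 = (p0+q0+1)^2*(a0*c0-b0^2) := by
  linear_combination c1*h1a + (p0*a0 - p0*b0 + q0*b0 - q0*c0 + b0 - c0 - b1)*h1b
    + (a0-2*b0+c0)*h1c

private lemma deltaV2 (p0 q0 a0 b0 c0 a2 b2 c2 : ℝ)
    (h2a : a2 = a0*(1+p0)^2 + 2*b0*(1+p0)*q0 + c0*q0^2)
    (h2b : b2 = -(b0*(1+p0) + c0*q0))
    (h2c : c2 = c0) :
    a2*c2 - b2^2 = (1+p0)^2*(a0*c0-b0^2) := by
  linear_combination c2*h2a + (p0*b0 + q0*c0 + b0 - b2)*h2b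
    + (p0^2*a0 + 2*p0*q0*b0 + q0^2*c0 + 2*p0*a0 + 2*q0*b0 + a0)*h2c

private lemma E12Aux (p0 q0 p1 q1 a0 b0 c0 a1 b1 c1 b2 c2 : ℝ)
    (h1a : a1 = a0 - 2*b0 + c0)
    (h1b : b1 = p0*(b0-a0) + (1+q0)*(c0-b0))
    (h1c : c1 = a0*p0^2 + 2*b0*p0*(1+q0) + c0*(1+q0)^2)
    (h2b : b2 = p1*(b1-a1) + (1+q1)*(c1-b1))
    (h2c : c2 = a1*p1^2 + 2*b1*p1*(1+q1) + c1*(1+q1)^2)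
    (h2b' : b2 = -(b0*(1+p0) + c0*q0))
    (h2c' : c2 = c0) :
    (p0*(1+q1)-p1)*(a0*(1+p0)+b0*q0) + ((p1+(1+q0)*(1+q1))+1)*(b0*(1+p0)+c0*q0) = 0 ∧
    a0*(p0*(1+q1)-p1)^2 + 2*b0*(p0*(1+q1)-p1)*(p1+(1+q0)*(1+q1))
      + c0*(p1+(1+q0)*(1+q1))^2 = c0 := by
  constructor
  · linear_combination (-1)*h2b + h2b' + p1*h1a + (-p1+q1+1)*h1b + (-(q1+1))*h1c
  · linear_combination (-1)*h2c + h2c' + (-(p1^2))*h1a + (-(2*p1*(q1+1)))*h1b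
      + (-((q1+1)^2))*h1c

private lemma L1Aux (p0 q0 p1 q1 a0 b0 c0 : ℝ)
    (hE1 : (p0*(1+q1)-p1)*(a0*(1+p0)+b0*q0)
      + ((p1+(1+q0)*(1+q1))+1)*(b0*(1+p0)+c0*q0) = 0)
    (hE2 : a0*(p0*(1+q1)-p1)^2 + 2*b0*(p0*(1+q1)-p1)*(p1+(1+q0)*(1+q1))
      + c0*(p1+(1+q0)*(1+q1))^2 = c0)
    (hx : p0*(1+q1)-p1 = 2) (hy : p1+(1+q0)*(1+q1) = -1)
    (hd : p0+q0+1 ≠ 0) (hD : a0*c0 - b0^2 ≠ 0) : False := by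
  have hab : a0 = b0 := by
    linear_combination (1/4)*hE2 - (1/4)*(a0*((p0*(1+q1)-p1)+2)
      + 2*b0*(p1+(1+q0)*(1+q1)))*hx - (1/4)*(4*b0 + c0*((p1+(1+q0)*(1+q1))-1))*hy
  have ha : a0*(p0+q0+1) = 0 := by
    linear_combination (1/2)*hE1 - (1/2)*(a0*(1+p0)+b0*q0)*hx
      - (1/2)*(b0*(1+p0)+c0*q0)*hy + q0*hab
  have ha0 : a0 = 0 := by
    rcases mul_eq_zero.1 ha with h | h
    · exact h
    · exact absurd h hd
  have hb0 : b0 = 0 := by rw [ha0] at hab; exact hab.symm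
  exact hD (by rw [ha0, hb0]; ring)

private lemma XYAux (p0 p1 p2 p3 q0 q1 q2 q3 s2 s3 : ℝ)
    (hu1 : (1+p1)*(1+p3) = 1)
    (hv0 : q0*(1+p2) = q2) (hv1 : q1*(1+p3) = q3)
    (hα2 : (1+p2) ≠ 0) (hα3 : (1+p3) ≠ 0)
    (he2 : (p2+q2+1)*(p3+q3+1) = s2*(1+p2))
    (he3 : (p3+q3+1)*(p0+q0+1) = s3*(1+p3)) :
    (1+q0)*(1+q1) = s2*(1+p1) ∧ (p0+q0+1)*(1+q1) = s3 ∧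
    p1 + (1+q0)*(1+q1) = (1+s2)*(1+p1) - 1 ∧
    p0*(1+q1) - p1 = s3 + 1 - (1+s2)*(1+p1) := by
  have h1 : (1+p2)*((1+p3)*((1+q0)*(1+q1)) - s2) = 0 := by
    linear_combination he2 + ((1+p3)*(1+q1))*hv0 + (p2+q2+1)*hv1
  have hP2' : (1+p3)*((1+q0)*(1+q1)) = s2 := by
    rcases mul_eq_zero.1 h1 with h | h
    · exact absurd h hα2
    · linarith
  have hP2 : (1+q0)*(1+q1) = s2*(1+p1) := by
    linear_combination (1+p1)*hP2' - ((1+q0)*(1+q1))*hu1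
  have h3 : (1+p3)*((p0+q0+1)*(1+q1) - s3) = 0 := by
    linear_combination he3 + (p0+q0+1)*hv1
  have hP3 : (p0+q0+1)*(1+q1) = s3 := by
    rcases mul_eq_zero.1 h3 with h | h
    · exact absurd h hα3
    · linarith
  exact ⟨hP2, hP3, by linear_combination hP2, by linear_combination hP3 - hP2⟩

private lemma badPair (p0 p1 p2 p3 q0 q1 q2 q3 a0 b0 c0 : ℝ)
    (hu1 : (1+p1)*(1+p3) = 1)
    (hv0 : q0*(1+p2) = q2) (hv1 : q1*(1+p3) = q3)
    (hα2 : (1+p2) ≠ 0) (hα3 : (1+p3) ≠ 0)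
    (he2 : (p2+q2+1)*(p3+q3+1) = -(1+p2))
    (he3 : (p3+q3+1)*(p0+q0+1) = (1+p3))
    (hE1 : (p0*(1+q1)-p1)*(a0*(1+p0)+b0*q0)
      + ((p1+(1+q0)*(1+q1))+1)*(b0*(1+p0)+c0*q0) = 0)
    (hE2 : a0*(p0*(1+q1)-p1)^2 + 2*b0*(p0*(1+q1)-p1)*(p1+(1+q0)*(1+q1))
      + c0*(p1+(1+q0)*(1+q1))^2 = c0)
    (hd0 : p0+q0+1 ≠ 0) (hD0 : a0*c0 - b0^2 ≠ 0) : False := by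
  obtain ⟨-, -, hy, hx⟩ := XYAux p0 p1 p2 p3 q0 q1 q2 q3 (-1) 1 hu1 hv0 hv1 hα2 hα3
    (by linear_combination he2) (by linear_combination he3)
  exact L1Aux p0 q0 p1 q1 a0 b0 c0 hE1 hE2 (by linear_combination hx)
    (by linear_combination hy) hd0 hD0

private lemma master (p0 p1 p2 p3 q0 q1 q2 q3 a0 a1 a2 a3 b0 b1 b2 b3 c0 c1 c2 c3 : ℝ)
    (hA10 : a1 = a0 - 2*b0 + c0)
    (hB10 : b1 = p0*(b0-a0) + (1+q0)*(c0-b0))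
    (hC10 : c1 = a0*p0^2 + 2*b0*p0*(1+q0) + c0*(1+q0)^2)
    (hA11 : a2 = a1 - 2*b1 + c1)
    (hB11 : b2 = p1*(b1-a1) + (1+q1)*(c1-b1))
    (hC11 : c2 = a1*p1^2 + 2*b1*p1*(1+q1) + c1*(1+q1)^2)
    (hA12 : a3 = a2 - 2*b2 + c2)
    (hB12 : b3 = p2*(b2-a2) + (1+q2)*(c2-b2))
    (hC12 : c3 = a2*p2^2 + 2*b2*p2*(1+q2) + c2*(1+q2)^2)
    (hA13 : a0 = a3 - 2*b3 + c3)
    (hB13 : b0 = p3*(b3-a3) + (1+q3)*(c3-b3))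
    (hC13 : c0 = a3*p3^2 + 2*b3*p3*(1+q3) + c3*(1+q3)^2)
    (hA20 : a2 = a0*(1+p0)^2 + 2*b0*(1+p0)*q0 + c0*q0^2)
    (hB20 : b2 = -(b0*(1+p0) + c0*q0))
    (hC20 : c2 = c0)
    (hA21 : a3 = a1*(1+p1)^2 + 2*b1*(1+p1)*q1 + c1*q1^2)
    (hB21 : b3 = -(b1*(1+p1) + c1*q1))
    (hC21 : c3 = c1)
    (hA22 : a0 = a2*(1+p2)^2 + 2*b2*(1+p2)*q2 + c2*q2^2)
    (hB22 : b0 = -(b2*(1+p2) + c2*q2))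
    (hC22 : c0 = c2)
    (hA23 : a1 = a3*(1+p3)^2 + 2*b3*(1+p3)*q3 + c3*q3^2)
    (hB23 : b1 = -(b3*(1+p3) + c3*q3))
    (hC23 : c1 = c3)
    (hD0 : a0*c0 - b0^2 ≠ 0) (hD1 : a1*c1 - b1^2 ≠ 0)
    (hD2 : a2*c2 - b2^2 ≠ 0) (hD3 : a3*c3 - b3^2 ≠ 0) :
    ((1+p0)*(1+p2) = 1 ∧ q0*(1+p2) = q2) ∧
    (p0*(1+q1) = p1 ∧ p1 + (1+q0)*(1+q1) = -1) := by
  -- biangle at the four bases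
  obtain ⟨hu0, hv0⟩ := biangleAux p0 q0 p2 q2 a0 b0 c0 a2 b2 c2 c1 c3
    hA20 hB20 hC20 hA22 hB22 hC10 hC12 hC21 hD0
  obtain ⟨hu1, hv1⟩ := biangleAux p1 q1 p3 q3 a1 b1 c1 a3 b3 c3 c2 c0
    hA21 hB21 hC21 hA23 hB23 hC11 hC13 hC22 hD1
  obtain ⟨hu2, hv2⟩ := biangleAux p2 q2 p0 q0 a2 b2 c2 a0 b0 c0 c3 c1
    hA22 hB22 hC22 hA20 hB20 hC12 hC10 hC21.symm hD2
  obtain ⟨hu3, hv3⟩ := biangleAux p3 q3 p1 q1 a3 b3 c3 a1 b1 c1 c0 c2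
    hA23 hB23 hC23 hA21 hB21 hC13 hC11 hC22.symm hD3
  -- nonvanishing of 1 + p
  have hα0 : (1+p0) ≠ 0 := fun h => by rw [h, zero_mul] at hu0; norm_num at hu0
  have hα1 : (1+p1) ≠ 0 := fun h => by rw [h, zero_mul] at hu1; norm_num at hu1
  have hα2 : (1+p2) ≠ 0 := fun h => by rw [h, zero_mul] at hu2; norm_num at hu2
  have hα3 : (1+p3) ≠ 0 := fun h => by rw [h, zero_mul] at hu3; norm_num at hu3
  -- determinant propagation
  have hΔ10 := deltaV1 p0 q0 a0 b0 c0 a1 b1 c1 hA10 hB10 hC10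
  have hΔ11 := deltaV1 p1 q1 a1 b1 c1 a2 b2 c2 hA11 hB11 hC11
  have hΔ12 := deltaV1 p2 q2 a2 b2 c2 a3 b3 c3 hA12 hB12 hC12
  have hΔ13 := deltaV1 p3 q3 a3 b3 c3 a0 b0 c0 hA13 hB13 hC13
  have hΔ20 := deltaV2 p0 q0 a0 b0 c0 a2 b2 c2 hA20 hB20 hC20
  have hΔ21 := deltaV2 p1 q1 a1 b1 c1 a3 b3 c3 hA21 hB21 hC21
  have hΔ22 := deltaV2 p2 q2 a2 b2 c2 a0 b0 c0 hA22 hB22 hC22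
  have hΔ23 := deltaV2 p3 q3 a3 b3 c3 a1 b1 c1 hA23 hB23 hC23
  have hd0 : p0+q0+1 ≠ 0 := by
    intro h; apply hD1; rw [hΔ10, h]; ring
  have hd1 : p1+q1+1 ≠ 0 := by
    intro h; apply hD2; rw [hΔ11, h]; ring
  have hd2 : p2+q2+1 ≠ 0 := by
    intro h; apply hD3; rw [hΔ12, h]; ring
  have hd3 : p3+q3+1 ≠ 0 := by
    intro h; apply hD0; rw [hΔ13, h]; ring
  -- sign dichotomies
  have hsq : ∀ X Y Δ : ℝ, (X^2 - Y^2)*Δ = 0 → Δ ≠ 0 → X = Y ∨ X = -Y := by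
    intro X Y Δ h hΔ
    have h2 : X^2 - Y^2 = 0 := by
      rcases mul_eq_zero.1 h with h | h
      · exact h
      · exact absurd h hΔ
    have h4 : (X - Y)*(X + Y) = 0 := by linear_combination h2
    rcases mul_eq_zero.1 h4 with h | h
    · exact Or.inl (by linarith)
    · exact Or.inr (by linarith)
  have hε0 : (p0+q0+1)*(p1+q1+1) = (1+p0) ∨ (p0+q0+1)*(p1+q1+1) = -(1+p0) :=
    hsq ((p0+q0+1)*(p1+q1+1)) (1+p0) (a0*c0-b0^2)
      (by linear_combination (-1)*hΔ11 - (p1+q1+1)^2*hΔ10 + hΔ20) hD0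
  have hε1 : (p1+q1+1)*(p2+q2+1) = (1+p1) ∨ (p1+q1+1)*(p2+q2+1) = -(1+p1) :=
    hsq ((p1+q1+1)*(p2+q2+1)) (1+p1) (a1*c1-b1^2)
      (by linear_combination (-1)*hΔ12 - (p2+q2+1)^2*hΔ11 + hΔ21) hD1
  have hε2 : (p2+q2+1)*(p3+q3+1) = (1+p2) ∨ (p2+q2+1)*(p3+q3+1) = -(1+p2) :=
    hsq ((p2+q2+1)*(p3+q3+1)) (1+p2) (a2*c2-b2^2)
      (by linear_combination (-1)*hΔ13 - (p3+q3+1)^2*hΔ12 + hΔ22) hD2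
  have hε3 : (p3+q3+1)*(p0+q0+1) = (1+p3) ∨ (p3+q3+1)*(p0+q0+1) = -(1+p3) :=
    hsq ((p3+q3+1)*(p0+q0+1)) (1+p3) (a3*c3-b3^2)
      (by linear_combination (-1)*hΔ10 - (p0+q0+1)^2*hΔ13 + hΔ23) hD3
  -- cycle-consistency equations
  obtain ⟨hE10, hE20⟩ := E12Aux p0 q0 p1 q1 a0 b0 c0 a1 b1 c1 b2 c2
    hA10 hB10 hC10 hB11 hC11 hB20 hC20
  obtain ⟨hE11, hE21⟩ := E12Aux p1 q1 p2 q2 a1 b1 c1 a2 b2 c2 b3 c3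
    hA11 hB11 hC11 hB12 hC12 hB21 hC21
  obtain ⟨hE12, hE22⟩ := E12Aux p2 q2 p3 q3 a2 b2 c2 a3 b3 c3 b0 c0
    hA12 hB12 hC12 hB13 hC13 hB22 hC22
  obtain ⟨hE13, hE23⟩ := E12Aux p3 q3 p0 q0 a3 b3 c3 a0 b0 c0 b1 c1
    hA13 hB13 hC13 hB10 hC10 hB23 hC23
  rcases hε0 with he0 | he0 <;> rcases hε1 with he1 | he1 <;>
    rcases hε2 with he2 | he2 <;> rcases hε3 with he3 | he3
  -- (+,+,+,+) : the L2 case, contradiction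
  · exfalso
    obtain ⟨hP20, hP30, hy0, hx0⟩ := XYAux p0 p1 p2 p3 q0 q1 q2 q3 1 1 hu1 hv0 hv1 hα2 hα3
      (by linear_combination he2) (by linear_combination he3)
    obtain ⟨hP21, hP31, hy1, hx1⟩ := XYAux p1 p2 p3 p0 q1 q2 q3 q0 1 1 hu2 hv1 hv2 hα3 hα0
      (by linear_combination he3) (by linear_combination he0)
    obtain ⟨hP22, hP32, hy2, hx2⟩ := XYAux p2 p3 p0 p1 q2 q3 q0 q1 1 1 hu3 hv2 hv3 hα0 hα1
      (by linear_combination he0) (by linear_combination he1)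
    obtain ⟨hP23, hP33, hy3, hx3⟩ := XYAux p3 p0 p1 p2 q3 q0 q1 q2 1 1 hu0 hv3 hv0 hα1 hα2
      (by linear_combination he1) (by linear_combination he2)
    have hstar : (1+q1)*p0 = -p1 := by linear_combination hP30 - hP20
    have hstar2 : (p0+q0+1)*p1 = p0 := by linear_combination he0 - hP30
    have hp0 : p0 = 0 := by
      linear_combination (1/2)*(p0+q0+1)*hstar - (1/2)*p0*hP30 - (1/2)*hstar2
    have hp1 : p1 = 0 := by linear_combination hstar - (1+q1)*hp0
    have hp2 : p2 = 0 := by linear_combination hu0 - (1+p2)*hp0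
    have hp3 : p3 = 0 := by linear_combination hu1 - (1+p3)*hp1
    have hx0' : p0*(1+q1) - p1 = 0 := by linear_combination hx0 - 2*hp1
    have hy0' : p1 + (1+q0)*(1+q1) = 1 := by linear_combination hy0 + 2*hp1
    have hx1' : p1*(1+q2) - p2 = 0 := by linear_combination hx1 - 2*hp2
    have hy1' : p2 + (1+q1)*(1+q2) = 1 := by linear_combination hy1 + 2*hp2
    have hx2' : p2*(1+q3) - p3 = 0 := by linear_combination hx2 - 2*hp3
    have hy2' : p3 + (1+q2)*(1+q3) = 1 := by linear_combination hy2 + 2*hp3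
    have hx3' : p3*(1+q0) - p0 = 0 := by linear_combination hx3 - 2*hp0
    have hy3' : p0 + (1+q3)*(1+q0) = 1 := by linear_combination hy3 + 2*hp0
    have hbc0 : b0 + c0*q0 = 0 := by
      linear_combination (1/2)*hE10 - (1/2)*(a0*(1+p0)+b0*q0)*hx0'
        - (1/2)*(b0*(1+p0)+c0*q0)*hy0' - b0*hp0
    have hbc1 : b1 + c1*q1 = 0 := by
      linear_combination (1/2)*hE11 - (1/2)*(a1*(1+p1)+b1*q1)*hx1'
        - (1/2)*(b1*(1+p1)+c1*q1)*hy1' - b1*hp1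
    have hbc2 : b2 + c2*q2 = 0 := by
      linear_combination (1/2)*hE12 - (1/2)*(a2*(1+p2)+b2*q2)*hx2'
        - (1/2)*(b2*(1+p2)+c2*q2)*hy2' - b2*hp2
    have hbc3 : b3 + c3*q3 = 0 := by
      linear_combination (1/2)*hE13 - (1/2)*(a3*(1+p3)+b3*q3)*hx3'
        - (1/2)*(b3*(1+p3)+c3*q3)*hy3' - b3*hp3
    have hb2z : b2 = 0 := by linear_combination hB20 - hbc0 - b0*hp0
    have hb3z : b3 = 0 := by linear_combination hB21 - hbc1 - b1*hp1
    have hb0z : b0 = 0 := by linear_combination hB22 - hbc2 - b2*hp2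
    have hb1z : b1 = 0 := by linear_combination hB23 - hbc3 - b3*hp3
    have hc0ne : c0 ≠ 0 := fun h => hD0 (by rw [h, hb0z]; ring)
    have hq0 : q0 = 0 := by
      have hcq : c0*q0 = 0 := by linear_combination hbc0 - hb0z
      rcases mul_eq_zero.1 hcq with h | h
      · exact absurd h hc0ne
      · exact h
    have : c0 = 0 := by
      linear_combination (-1)*hB10 + hb1z - (b0-a0)*hp0 - (c0-b0)*hq0 + hb0z
    exact hc0ne this
  -- (+,+,+,-) : bad pair at j=3, base k=1
  · exact (badPair p1 p2 p3 p0 q1 q2 q3 q0 a1 b1 c1 hu2 hv1 hv2 hα3 hα0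
      he3 he0 hE11 hE21 hd1 hD1).elim
  -- (+,+,-,+) : bad pair j=2, base k=0
  · exact (badPair p0 p1 p2 p3 q0 q1 q2 q3 a0 b0 c0 hu1 hv0 hv1 hα2 hα3
      he2 he3 hE10 hE20 hd0 hD0).elim
  -- (+,+,-,-) : j=3, base 1
  · exact (badPair p1 p2 p3 p0 q1 q2 q3 q0 a1 b1 c1 hu2 hv1 hv2 hα3 hα0
      he3 he0 hE11 hE21 hd1 hD1).elim
  -- (+,-,+,+) : j=1, base 3
  · exact (badPair p3 p0 p1 p2 q3 q0 q1 q2 a3 b3 c3 hu0 hv3 hv0 hα1 hα2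
      he1 he2 hE13 hE23 hd3 hD3).elim
  -- (+,-,+,-) : j=1, base 3
  · exact (badPair p3 p0 p1 p2 q3 q0 q1 q2 a3 b3 c3 hu0 hv3 hv0 hα1 hα2
      he1 he2 hE13 hE23 hd3 hD3).elim
  -- (+,-,-,+) : j=2, base 0
  · exact (badPair p0 p1 p2 p3 q0 q1 q2 q3 a0 b0 c0 hu1 hv0 hv1 hα2 hα3
      he2 he3 hE10 hE20 hd0 hD0).elim
  -- (+,-,-,-) : j=3, base 1
  · exact (badPair p1 p2 p3 p0 q1 q2 q3 q0 a1 b1 c1 hu2 hv1 hv2 hα3 hα0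
      he3 he0 hE11 hE21 hd1 hD1).elim
  -- (-,+,+,+) : j=0, base 2
  · exact (badPair p2 p3 p0 p1 q2 q3 q0 q1 a2 b2 c2 hu3 hv2 hv3 hα0 hα1
      he0 he1 hE12 hE22 hd2 hD2).elim
  -- (-,+,+,-) : j=0, base 2
  · exact (badPair p2 p3 p0 p1 q2 q3 q0 q1 a2 b2 c2 hu3 hv2 hv3 hα0 hα1
      he0 he1 hE12 hE22 hd2 hD2).elim
  -- (-,+,-,+) : j=0, base 2
  · exact (badPair p2 p3 p0 p1 q2 q3 q0 q1 a2 b2 c2 hu3 hv2 hv3 hα0 hα1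
      he0 he1 hE12 hE22 hd2 hD2).elim
  -- (-,+,-,-) : j=0, base 2
  · exact (badPair p2 p3 p0 p1 q2 q3 q0 q1 a2 b2 c2 hu3 hv2 hv3 hα0 hα1
      he0 he1 hE12 hE22 hd2 hD2).elim
  -- (-,-,+,+) : j=1, base 3
  · exact (badPair p3 p0 p1 p2 q3 q0 q1 q2 a3 b3 c3 hu0 hv3 hv0 hα1 hα2
      he1 he2 hE13 hE23 hd3 hD3).elim
  -- (-,-,+,-) : j=1, base 3
  · exact (badPair p3 p0 p1 p2 q3 q0 q1 q2 a3 b3 c3 hu0 hv3 hv0 hα1 hα2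
      he1 he2 hE13 hE23 hd3 hD3).elim
  -- (-,-,-,+) : j=2, base 0
  · exact (badPair p0 p1 p2 p3 q0 q1 q2 q3 a0 b0 c0 hu1 hv0 hv1 hα2 hα3
      he2 he3 hE10 hE20 hd0 hD0).elim
  -- (-,-,-,-) : flat case, conclude
  · obtain ⟨-, -, hy, hx⟩ := XYAux p0 p1 p2 p3 q0 q1 q2 q3 (-1) (-1) hu1 hv0 hv1 hα2 hα3
      (by linear_combination he2) (by linear_combination he3)
    exact ⟨⟨hu0, hv0⟩, by linear_combination hx, by linear_combination hy⟩

private lemma compat1_entries (p q : ℝ) (M N : Matrix (Fin 2) (Fin 2) ℝ)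
    (h : N = (!![-1, p; 1, 1+q])ᵀ * M * !![-1, p; 1, 1+q]) (hs : M 1 0 = M 0 1) :
    N 0 0 = M 0 0 - 2*(M 0 1) + M 1 1 ∧
    N 0 1 = p*(M 0 1 - M 0 0) + (1+q)*(M 1 1 - M 0 1) ∧
    N 1 1 = M 0 0*p^2 + 2*(M 0 1)*p*(1+q) + M 1 1*(1+q)^2 := by
  subst h
  refine ⟨?_, ?_, ?_⟩ <;>
    · simp [Matrix.mul_apply, Matrix.transpose_apply, Fin.sum_univ_two, hs, Matrix.vecHead, Matrix.vecTail]
      ring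

private lemma compat2_entries (p q : ℝ) (M N : Matrix (Fin 2) (Fin 2) ℝ)
    (h : N = (!![1+p, 0; q, -1])ᵀ * M * !![1+p, 0; q, -1]) (hs : M 1 0 = M 0 1) :
    N 0 0 = M 0 0*(1+p)^2 + 2*(M 0 1)*(1+p)*q + M 1 1*q^2 ∧
    N 0 1 = -((M 0 1)*(1+p) + M 1 1*q) ∧
    N 1 1 = M 1 1 := by
  subst h
  refine ⟨?_, ?_, ?_⟩ <;>
    · simp [Matrix.mul_apply, Matrix.transpose_apply, Fin.sum_univ_two, hs, Matrix.vecHead, Matrix.vecTail]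
      try ring

/-- Every Levi-Civita connection on the group lattice `(ℤ₄, {1,2})` is flat:
the biangle, triangle and quadrangle curvature components vanish. -/
theorem z4_12_leviCivita_flat (p q : ZMod 4 → ℝ)
    (𝔤 : ZMod 4 → Matrix (Fin 2) (Fin 2) ℝ)
    (hsym : ∀ g, (𝔤 g).IsSymm) (hinv : ∀ g, IsUnit (𝔤 g))
    (hc1 : ∀ g, 𝔤 (g + 1) = (z4V₁ p q g)ᵀ * 𝔤 g * z4V₁ p q g)
    (hc2 : ∀ g, 𝔤 (g + 2) = (z4V₂ p q g)ᵀ * 𝔤 g * z4V₂ p q g) :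
    ∀ g : ZMod 4,
      z4V₂ p q g * z4V₂ p q (g + 2) = 1 ∧
      z4V₁ p q g * z4V₁ p q (g + 1) = z4V₂ p q g ∧
      z4V₁ p q g * z4V₂ p q (g + 1) = z4V₂ p q g * z4V₁ p q (g + 2) := by
  -- symmetry of the metric entries
  have hs : ∀ g : ZMod 4, 𝔤 g 1 0 = 𝔤 g 0 1 := by
    intro g
    have h := hsym g
    rw [Matrix.IsSymm] at h
    have := congrFun (congrFun h 0) 1
    simpa using this
  -- nonvanishing determinant
  have hdet : ∀ g : ZMod 4, 𝔤 g 0 0 * 𝔤 g 1 1 - (𝔤 g 0 1)^2 ≠ 0 := by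
    intro g hz
    have hu : IsUnit (𝔤 g).det := (Matrix.isUnit_iff_isUnit_det _).1 (hinv g)
    apply hu.ne_zero
    rw [Matrix.det_fin_two, hs g]
    linear_combination hz
  -- index arithmetic in ZMod 4
  have idx : ∀ g : ZMod 4, g+1+1 = g+2 ∧ g+2+1 = g+3 ∧ g+3+1 = g ∧
      g+1+2 = g+3 ∧ g+2+2 = g ∧ g+3+2 = g+1 ∧ g+1+3 = g ∧ g+3+3 = g+2 ∧
      g+2+3 = g+1 := by
    intro g
    refine ⟨?_, ?_, ?_, ?_, ?_, ?_, ?_, ?_, ?_⟩ <;>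
      · rw [add_assoc]
        norm_num
        try rfl
  intro g
  obtain ⟨i11, i21, i31, i12, i22, i32, i13, i33, i23⟩ := idx g
  -- extract scalar equations at the four bases
  obtain ⟨hA10, hB10, hC10⟩ := compat1_entries (p g) (q g) (𝔤 g) (𝔤 (g+1))
    (by simpa [z4V₁] using hc1 g) (hs g)
  obtain ⟨hA11, hB11, hC11⟩ := compat1_entries (p (g+1)) (q (g+1)) (𝔤 (g+1)) (𝔤 (g+2))
    (by simpa [z4V₁, i11] using hc1 (g+1)) (hs (g+1))
  obtain ⟨hA12, hB12, hC12⟩ := compat1_entries (p (g+2)) (q (g+2)) (𝔤 (g+2)) (𝔤 (g+3))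
    (by simpa [z4V₁, i21] using hc1 (g+2)) (hs (g+2))
  obtain ⟨hA13, hB13, hC13⟩ := compat1_entries (p (g+3)) (q (g+3)) (𝔤 (g+3)) (𝔤 g)
    (by simpa [z4V₁, i31] using hc1 (g+3)) (hs (g+3))
  obtain ⟨hA20, hB20, hC20⟩ := compat2_entries (p g) (q g) (𝔤 g) (𝔤 (g+2))
    (by simpa [z4V₂] using hc2 g) (hs g)
  obtain ⟨hA21, hB21, hC21⟩ := compat2_entries (p (g+1)) (q (g+1)) (𝔤 (g+1)) (𝔤 (g+3))
    (by simpa [z4V₂, i12] using hc2 (g+1)) (hs (g+1))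
  obtain ⟨hA22, hB22, hC22⟩ := compat2_entries (p (g+2)) (q (g+2)) (𝔤 (g+2)) (𝔤 g)
    (by simpa [z4V₂, i22] using hc2 (g+2)) (hs (g+2))
  obtain ⟨hA23, hB23, hC23⟩ := compat2_entries (p (g+3)) (q (g+3)) (𝔤 (g+3)) (𝔤 (g+1))
    (by simpa [z4V₂, i32] using hc2 (g+3)) (hs (g+3))
  -- apply the master lemma at base g
  obtain ⟨⟨hbu, hbv⟩, htx, hty⟩ := master (p g) (p (g+1)) (p (g+2)) (p (g+3))
    (q g) (q (g+1)) (q (g+2)) (q (g+3))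
    (𝔤 g 0 0) (𝔤 (g+1) 0 0) (𝔤 (g+2) 0 0) (𝔤 (g+3) 0 0)
    (𝔤 g 0 1) (𝔤 (g+1) 0 1) (𝔤 (g+2) 0 1) (𝔤 (g+3) 0 1)
    (𝔤 g 1 1) (𝔤 (g+1) 1 1) (𝔤 (g+2) 1 1) (𝔤 (g+3) 1 1)
    hA10 hB10 hC10 hA11 hB11 hC11 hA12 hB12 hC12 hA13 hB13 hC13
    hA20 hB20 hC20 hA21 hB21 hC21 hA22 hB22 hC22 hA23 hB23 hC23
    (hdet g) (hdet (g+1)) (hdet (g+2)) (hdet (g+3))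
  -- apply the master lemma at base g+1 (for the triangle at g+1)
  obtain ⟨-, htx1, hty1⟩ := master (p (g+1)) (p (g+2)) (p (g+3)) (p g)
    (q (g+1)) (q (g+2)) (q (g+3)) (q g)
    (𝔤 (g+1) 0 0) (𝔤 (g+2) 0 0) (𝔤 (g+3) 0 0) (𝔤 g 0 0)
    (𝔤 (g+1) 0 1) (𝔤 (g+2) 0 1) (𝔤 (g+3) 0 1) (𝔤 g 0 1)
    (𝔤 (g+1) 1 1) (𝔤 (g+2) 1 1) (𝔤 (g+3) 1 1) (𝔤 g 1 1)
    hA11 hB11 hC11 hA12 hB12 hC12 hA13 hB13 hC13 hA10 hB10 hC10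
    hA21 hB21 hC21 hA22 hB22 hC22 hA23 hB23 hC23 hA20 hB20 hC20
    (hdet (g+1)) (hdet (g+2)) (hdet (g+3)) (hdet g)
  -- triangle at base g
  have htri : z4V₁ p q g * z4V₁ p q (g + 1) = z4V₂ p q g := by
    show !![-1, p g; 1, 1 + q g] * !![-1, p (g+1); 1, 1 + q (g+1)]
        = !![1 + p g, 0; q g, -1]
    ext i j
    fin_cases i <;> fin_cases j <;> simp [Matrix.mul_apply, Fin.sum_univ_two] <;>
      first
        | linear_combination htx
        | linear_combination hty
        | ring
  -- triangle at base g+1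
  have htri1 : z4V₁ p q (g+1) * z4V₁ p q (g + 2) = z4V₂ p q (g+1) := by
    show !![-1, p (g+1); 1, 1 + q (g+1)] * !![-1, p (g+2); 1, 1 + q (g+2)]
        = !![1 + p (g+1), 0; q (g+1), -1]
    ext i j
    fin_cases i <;> fin_cases j <;> simp [Matrix.mul_apply, Fin.sum_univ_two] <;>
      first
        | linear_combination htx1
        | linear_combination hty1
        | ring
  refine ⟨?_, htri, ?_⟩
  · -- biangle
    show !![1 + p g, 0; q g, -1] * !![1 + p (g+2), 0; q (g+2), -1] = 1
    ext i j
    fin_cases i <;> fin_cases j <;>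
      simp [Matrix.mul_apply, Fin.sum_univ_two, Matrix.one_apply]
    · linear_combination hbu
    · linear_combination hbv
  · -- quadrangle
    calc z4V₁ p q g * z4V₂ p q (g + 1)
        = z4V₁ p q g * (z4V₁ p q (g+1) * z4V₁ p q (g+2)) := by rw [htri1]
      _ = (z4V₁ p q g * z4V₁ p q (g+1)) * z4V₁ p q (g+2) := by rw [mul_assoc]
      _ = z4V₂ p q g * z4V₁ p q (g + 2) := by rw [htri]
end

section
/- Classification of the pointwise solutions for a Levi-Civita connection on the hypercubic ℤ² lattice with the standard Euclidean metric: let p, q, r, s, u, v be real numbers and set V₁ = !![p, u; q, 1+v], V₂ = !![1+u, r; v, s] (the general torsion-free form). Then V₁ᵀ·V₁ = 1 and V₂ᵀ·V₂ = 1 hold if and only if there exist ε₁, ε₂ ∈ {1, -1} such that either V₁ = !![ε₁, 0; 0, 1] and V₂ = !![1, 0; 0, ε₂], or V₁ = !![0, -1; ε₁, 0] and V₂ = !![0, ε₂; -1, 0]. -/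
open Matrix

lemma transpose_fin_two' (a b c d : ℝ) : (!![a, b; c, d])ᵀ = !![a, c; b, d] := by
  ext i j; fin_cases i <;> fin_cases j <;> rfl

/-- Pointwise classification of Levi-Civita connections on the hypercubic `ℤ²`
lattice with the standard Euclidean metric: the torsion-free transport matrices
`V₁ = !![p,u;q,1+v]`, `V₂ = !![1+u,r;v,s]` are orthogonal if and only if they
are of one of the two listed forms with signs `ε₁, ε₂ ∈ {1,-1}`. -/
theorem z2_euclidean_leviCivita_classification (p q r s u v : ℝ) :
    ((!![p, u; q, 1 + v])ᵀ * !![p, u; q, 1 + v] = 1 ∧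
        (!![1 + u, r; v, s])ᵀ * !![1 + u, r; v, s] = 1) ↔
      ∃ ε₁ ε₂ : ℝ, (ε₁ = 1 ∨ ε₁ = -1) ∧ (ε₂ = 1 ∨ ε₂ = -1) ∧
        ((!![p, u; q, 1 + v] = !![ε₁, 0; 0, 1] ∧ !![1 + u, r; v, s] = !![1, 0; 0, ε₂]) ∨
          (!![p, u; q, 1 + v] = !![0, -1; ε₁, 0] ∧ !![1 + u, r; v, s] = !![0, ε₂; -1, 0])) := by
  rw [transpose_fin_two', transpose_fin_two', Matrix.mul_fin_two, Matrix.mul_fin_two,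
    Matrix.one_fin_two]
  constructor
  · rintro ⟨h1, h2⟩
    rw [← Matrix.ext_iff] at h1 h2
    simp [Fin.forall_fin_two] at h1 h2
    obtain ⟨⟨a1, a2⟩, _, a3⟩ := h1
    obtain ⟨⟨b1, b2⟩, _, b3⟩ := h2
    have huv : u = v := by nlinarith
    have hv : v = 0 ∨ v = -1 := by
      rcases mul_eq_zero.1 (show v * (v + 1) = 0 by nlinarith) with h | h
      · exact Or.inl h
      · exact Or.inr (by linarith)
    rcases hv with h | h <;> subst h <;> subst huv
    · have hq : q = 0 := by nlinarith
      have hr : r = 0 := by nlinarith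
      subst hq hr
      refine ⟨p, s, mul_self_eq_one_iff.1 (by nlinarith), mul_self_eq_one_iff.1 (by nlinarith),
        Or.inl ⟨?_, ?_⟩⟩ <;> ext i j <;> fin_cases i <;> fin_cases j <;> norm_num
    · have hp : p = 0 := by nlinarith
      have hs : s = 0 := by nlinarith
      subst hp hs
      refine ⟨q, r, mul_self_eq_one_iff.1 (by nlinarith), mul_self_eq_one_iff.1 (by nlinarith),
        Or.inr ⟨?_, ?_⟩⟩ <;> ext i j <;> fin_cases i <;> fin_cases j <;> norm_num
  · rintro ⟨ε₁, ε₂, h1, h2, (⟨hA, hB⟩ | ⟨hA, hB⟩)⟩ <;>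
      rw [← Matrix.ext_iff] at hA hB <;>
      simp [Fin.forall_fin_two] at hA hB <;>
      obtain ⟨⟨a1, a2⟩, a3, a4⟩ := hA <;> obtain ⟨⟨b1, b2⟩, b3, b4⟩ := hB <;>
      rcases h1 with h1 | h1 <;> rcases h2 with h2 | h2 <;> subst h1 h2 <;>
      constructor <;> rw [← Matrix.ext_iff] <;> simp [Fin.forall_fin_two] <;>
      norm_num [a1, a2, a3, a4, b1, b2, b3, b4]
end

section
/- The freedom in a Levi-Civita connection on a hypercubic lattice consists of reflections: let E be a real inner product space, u₁, u₂, V₁₂, V₂₁ ∈ E, and let J₁, J₂ : E → E be linear isometries. Assume the torsion-free conditions u₁ + V₁₂ = u₂ + V₂₁ and u₁ + J₁(V₁₂) = u₂ + J₂(V₂₁). Set A := J₁(V₁₂) − V₁₂. Then: (i) A = J₂(V₂₁) − V₂₁; (ii) ⟨A, A + 2·V₁₂⟩ = 0 and ⟨A, A + 2·V₂₁⟩ = 0; (iii) ⟨A, u₂ − u₁⟩ = 0; and (iv) if A ≠ 0 then, with the unit vector a := ‖A‖⁻¹ · A (which is orthogonal to u₂ − u₁), J₁(V₁₂) = V₁₂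 − 2·⟨a, V₁₂⟩·a and J₂(V₂₁) = V₂₁ − 2·⟨a, V₂₁⟩·a, i.e. J₁ and J₂ act on V₁₂ and V₂₁ as the reflection in the hyperplane orthogonal to a. -/
/-!
Subtracting the two torsion-free conditions gives `J₁ V₁₂ - V₁₂ = J₂ V₂₁ - V₂₁`. Since isometries
preserve norms, `A` is the difference `J V - V` of two vectors of equal length, so
`⟪A, V⟫ = -‖A‖² / 2` for both `V = V₁₂` and `V = V₂₁`; as `u₂ - u₁ = V₁₂ - V₂₁`, this gives
`A ⟂ u₂ - u₁`, and the reflection in `Aᗮ` sends `V` to `V + A = J V`.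
-/

open RealInnerProductSpace

section

variable {E : Type*} [NormedAddCommGroup E] [InnerProductSpace ℝ E]

theorem real_inner_sub_add_two_smul_eq_zero_of_norm_eq {x y : E} (h : ‖x‖ = ‖y‖) :
    ⟪x - y, (x - y) + (2 : ℝ) • y⟫ = 0 := by
  have hxy : (x - y) + (2 : ℝ) • y = x + y := by rw [two_smul]; abel
  rw [hxy, real_inner_comm]
  exact (real_inner_add_sub_eq_zero_iff x y).mpr h

theorem real_inner_sub_eq_neg_half_norm_sq_of_norm_eq {x y : E} (h : ‖x‖ = ‖y‖) :
    ⟪x - y, y⟫ = -‖x - y‖ ^ 2 / 2 := by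
  have h0 := real_inner_sub_add_two_smul_eq_zero_of_norm_eq h
  rw [inner_add_right, real_inner_smul_right, real_inner_self_eq_norm_sq] at h0
  linarith

/-- Two distinct vectors of equal length are exchanged by the reflection in the hyperplane
orthogonal to their difference. -/
theorem eq_sub_two_inner_smul_of_norm_eq {x y : E} (h : ‖x‖ = ‖y‖) (hne : x - y ≠ 0) :
    x = y - (2 * ⟪‖x - y‖⁻¹ • (x - y), y⟫) • (‖x - y‖⁻¹ • (x - y)) := by
  have hn : ‖x - y‖ ≠ 0 := norm_ne_zero_iff.mpr hne
  have hcoeff : 2 * ⟪‖x - y‖⁻¹ • (x - y), y⟫ * ‖x - y‖⁻¹ = -1 := by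
    rw [real_inner_smul_left, real_inner_sub_eq_neg_half_norm_sq_of_norm_eq h]
    field_simp
  rw [smul_smul, hcoeff, neg_one_smul, sub_neg_eq_add, add_sub_cancel]

end

/-- The freedom in a Levi-Civita connection on a hypercubic lattice consists of
reflections: if the torsion-free conditions hold for the transports `V₁₂, V₂₁`
and for the modified transports `J₁(V₁₂), J₂(V₂₁)`, then
`A = J₁(V₁₂) − V₁₂ = J₂(V₂₁) − V₂₁` satisfies `⟨A, A + 2V₁₂⟩ = 0`,
`⟨A, A + 2V₂₁⟩ = 0`, `⟨A, u₂ − u₁⟩ = 0`, and if `A ≠ 0` then `J₁` and `J₂` act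
on `V₁₂` and `V₂₁` as the reflection in the hyperplane orthogonal to the unit
vector `a = ‖A‖⁻¹ • A` (which is orthogonal to `u₂ − u₁`). -/
theorem hypercubic_leviCivita_freedom_reflections
    {E : Type*} [NormedAddCommGroup E] [InnerProductSpace ℝ E]
    (u₁ u₂ V₁₂ V₂₁ : E) (J₁ J₂ : E →ₗᵢ[ℝ] E)
    (htf : u₁ + V₁₂ = u₂ + V₂₁)
    (htf' : u₁ + J₁ V₁₂ = u₂ + J₂ V₂₁)
    (A : E) (hA : A = J₁ V₁₂ - V₁₂) :
    A = J₂ V₂₁ - V₂₁ ∧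
    (inner ℝ A (A + (2 : ℝ) • V₁₂) : ℝ) = 0 ∧
    (inner ℝ A (A + (2 : ℝ) • V₂₁) : ℝ) = 0 ∧
    (inner ℝ A (u₂ - u₁) : ℝ) = 0 ∧
    (A ≠ 0 →
      (inner ℝ (‖A‖⁻¹ • A) (u₂ - u₁) : ℝ) = 0 ∧
      J₁ V₁₂ = V₁₂ - (2 * (inner ℝ (‖A‖⁻¹ • A) V₁₂ : ℝ)) • (‖A‖⁻¹ • A) ∧
      J₂ V₂₁ = V₂₁ - (2 * (inner ℝ (‖A‖⁻¹ • A) V₂₁ : ℝ)) • (‖A‖⁻¹ • A)) := by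
  have hA' : A = J₂ V₂₁ - V₂₁ := calc
    A = (u₁ + J₁ V₁₂) - (u₁ + V₁₂) := by rw [hA]; abel
    _ = (u₂ + J₂ V₂₁) - (u₂ + V₂₁) := by rw [htf, htf']
    _ = J₂ V₂₁ - V₂₁ := by abel
  have hn₁ : ‖J₁ V₁₂‖ = ‖V₁₂‖ := J₁.norm_map V₁₂
  have hn₂ : ‖J₂ V₂₁‖ = ‖V₂₁‖ := J₂.norm_map V₂₁
  have hu : ⟪A, u₂ - u₁⟫ = 0 := by
    have hdiff : u₂ - u₁ = V₁₂ - V₂₁ := sub_eq_sub_iff_add_eq_add.mpr (by rw [← htf, add_comm])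
    have h₁ := real_inner_sub_eq_neg_half_norm_sq_of_norm_eq hn₁
    have h₂ := real_inner_sub_eq_neg_half_norm_sq_of_norm_eq hn₂
    rw [← hA] at h₁
    rw [← hA'] at h₂
    rw [hdiff, inner_sub_right, h₁, h₂, sub_self]
  refine ⟨hA', hA ▸ real_inner_sub_add_two_smul_eq_zero_of_norm_eq hn₁,
    hA' ▸ real_inner_sub_add_two_smul_eq_zero_of_norm_eq hn₂, hu, fun hne => ⟨?_, ?_, ?_⟩⟩
  · rw [real_inner_smul_left, hu, mul_zero]
  · exact hA ▸ eq_sub_two_inner_smul_of_norm_eq hn₁ (hA ▸ hne)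
  · exact hA' ▸ eq_sub_two_inner_smul_of_norm_eq hn₂ (hA' ▸ hne)
end

section
/- Integrability conditions of the metric-compatibility equation: let G be a group, S ⊆ G finite with e ∉ S, 𝔤 : G → Matrix S S ℝ, and V : G → S → Matrix S S ℝ satisfying 𝔤(g·h) = (V g h)ᵀ · 𝔤(g) · (V g h) for all g ∈ G, h ∈ S. Then for any g ∈ G and h₁, h₂, ĥ₁, ĥ₂ ∈ S, the composite transports W := V g h₁ · V (g·h₁) h₂ and Ŵ := V g ĥ₁ · V (g·ĥ₁) ĥ₂ satisfy: (i) if h₁·h₂ = e (biangle) then Wᵀ · 𝔤(g) · W = 𝔤(g), i.e. the biangle holonomy is an isometry of 𝔤(g); (ii) if h₁·h₂ = h₀ ∈ S (triangle) then Wᵀ · 𝔤(g) · W = (V g h₀)ᵀ · 𝔤(g) · (V g h₀); (iii) if h₁·h₂ = ĥ₁·ĥ₂ (quadrangle) then Wᵀ · 𝔤(g) · W = Ŵᵀ · 𝔤(g) · Ŵ; consequently, when the transport matrices are invertible, the matrices B = W (biangle), T = W·(V g h₀)⁻¹ (triangle) and K = W·Ŵ⁻¹ (quadrangle) are isometries of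 𝔤(g). -/
open Matrix


private lemma isom_of_congr {n : Type*} [Fintype n] [DecidableEq n]
    (Gm A B : Matrix n n ℝ) (hB : IsUnit B)
    (h : Aᵀ * Gm * A = Bᵀ * Gm * B) :
    (A * B⁻¹)ᵀ * Gm * (A * B⁻¹) = Gm := by
  have hdet : IsUnit B.det := (Matrix.isUnit_iff_isUnit_det B).mp hB
  have h1 : B * B⁻¹ = 1 := Matrix.mul_nonsing_inv B hdet
  have h2 : B⁻¹ᵀ * Bᵀ = 1 := by
    rw [← Matrix.transpose_mul, h1, Matrix.transpose_one]
  calc (A * B⁻¹)ᵀ * Gm * (A * B⁻¹)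
      = B⁻¹ᵀ * (Aᵀ * Gm * A) * B⁻¹ := by
        rw [Matrix.transpose_mul]; noncomm_ring
    _ = B⁻¹ᵀ * (Bᵀ * Gm * B) * B⁻¹ := by rw [h]
    _ = (B⁻¹ᵀ * Bᵀ) * Gm * (B * B⁻¹) := by noncomm_ring
    _ = Gm := by rw [h1, h2, Matrix.one_mul, Matrix.mul_one]

/-- Integrability conditions of the metric-compatibility equation: the biangle,
triangle and quadrangle holonomies of a metric-compatible linear connection
relate congruent forms of the metric, and (for invertible transport matrices)
the matrices `B`, `T`, `K` are isometries of `𝔤(g)`.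
Here `k₁, k₂` play the role of `ĥ₁, ĥ₂`. -/
theorem metric_compatibility_integrability
    {G : Type*} [Group G] [DecidableEq G] (S : Set G) [Fintype S]
    (he : (1 : G) ∉ S)
    (𝔤 : G → Matrix S S ℝ) (hsym : ∀ g, (𝔤 g).IsSymm) (hinv : ∀ g, IsUnit (𝔤 g))
    (V : G → S → Matrix S S ℝ)
    (hcompat : ∀ (g : G) (h : S), 𝔤 (g * h) = (V g h)ᵀ * 𝔤 g * V g h)
    (g : G) (h₁ h₂ k₁ k₂ : S) :
    ((h₁ : G) * (h₂ : G) = 1 →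
      (V g h₁ * V (g * h₁) h₂)ᵀ * 𝔤 g * (V g h₁ * V (g * h₁) h₂) = 𝔤 g) ∧
    (∀ h₀ : S, (h₁ : G) * (h₂ : G) = (h₀ : G) →
      (V g h₁ * V (g * h₁) h₂)ᵀ * 𝔤 g * (V g h₁ * V (g * h₁) h₂) =
        (V g h₀)ᵀ * 𝔤 g * V g h₀) ∧
    ((h₁ : G) * (h₂ : G) = (k₁ : G) * (k₂ : G) →
      (V g h₁ * V (g * h₁) h₂)ᵀ * 𝔤 g * (V g h₁ * V (g * h₁) h₂) =
        (V g k₁ * V (g * k₁) k₂)ᵀ * 𝔤 g * (V g k₁ * V (g * k₁) k₂)) ∧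
    ((∀ (g' : G) (h : S), IsUnit (V g' h)) →
      (∀ h₀ : S, (h₁ : G) * (h₂ : G) = (h₀ : G) →
        (V g h₁ * V (g * h₁) h₂ * (V g h₀)⁻¹)ᵀ * 𝔤 g *
          (V g h₁ * V (g * h₁) h₂ * (V g h₀)⁻¹) = 𝔤 g) ∧
      ((h₁ : G) * (h₂ : G) = (k₁ : G) * (k₂ : G) →
        (V g h₁ * V (g * h₁) h₂ * (V g k₁ * V (g * k₁) k₂)⁻¹)ᵀ * 𝔤 g *
          (V g h₁ * V (g * h₁) h₂ * (V g k₁ * V (g * k₁) k₂)⁻¹) = 𝔤 g)) := by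
  have key : ∀ (a b : S), 𝔤 (g * a * b) =
      (V g a * V (g * a) b)ᵀ * 𝔤 g * (V g a * V (g * a) b) := by
    intro a b
    rw [hcompat (g * a) b, hcompat g a, Matrix.transpose_mul]
    noncomm_ring
  have hbi : ((h₁ : G) * (h₂ : G) = 1 →
      (V g h₁ * V (g * h₁) h₂)ᵀ * 𝔤 g * (V g h₁ * V (g * h₁) h₂) = 𝔤 g) := by
    intro h
    rw [← key h₁ h₂, mul_assoc, h, mul_one]
  have htri : (∀ h₀ : S, (h₁ : G) * (h₂ : G) = (h₀ : G) →
      (V g h₁ * V (g * h₁) h₂)ᵀ * 𝔤 g * (V g h₁ * V (g * h₁) h₂) =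
        (V g h₀)ᵀ * 𝔤 g * V g h₀) := by
    intro h₀ h
    rw [← key h₁ h₂, ← hcompat g h₀, mul_assoc, h]
  have hquad : ((h₁ : G) * (h₂ : G) = (k₁ : G) * (k₂ : G) →
      (V g h₁ * V (g * h₁) h₂)ᵀ * 𝔤 g * (V g h₁ * V (g * h₁) h₂) =
        (V g k₁ * V (g * k₁) k₂)ᵀ * 𝔤 g * (V g k₁ * V (g * k₁) k₂)) := by
    intro h
    rw [← key h₁ h₂, ← key k₁ k₂, mul_assoc, mul_assoc, h]
  refine ⟨hbi, htri, hquad, fun hV => ⟨fun h₀ h => ?_, fun h => ?_⟩⟩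
  · exact isom_of_congr _ _ _ (hV g h₀) (htri h₀ h)
  · exact isom_of_congr _ _ _ ((hV g k₁).mul (hV (g * k₁) k₂)) (hquad h)
end

section
/- Classification of constant metric-compatible linear connections with only quadrangle torsion on (ℤ₄, {1,2}) with the regular-tetrahedron metric: let p, q, r, s be real numbers, 𝔤 = !![1, 1/2; 1/2, 1], V₁ = !![-1, p; 1, 1+q], V₂ = !![1+r, 0; s, -1]. Then V₁ᵀ·𝔤·V₁ = 𝔤 and V₂ᵀ·𝔤·V₂ = 𝔤 hold if and only if q = p, p·(p+1) = 0, s = -1 - r/2 and r·(r+2) = 0; in particular there are exactly four such connections. -/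
open Matrix

/-- Classification of constant metric-compatible linear connections with only
quadrangle torsion on `(ℤ₄, {1,2})` with the regular-tetrahedron metric
`𝔤 = !![1, 1/2; 1/2, 1]`: the transport matrices `V₁ = !![-1,p;1,1+q]`,
`V₂ = !![1+r,0;s,-1]` are compatible with `𝔤` iff `q = p`, `p(p+1) = 0`,
`s = -1 - r/2` and `r(r+2) = 0`. -/
theorem z4_12_quadrangle_torsion_connections (p q r s : ℝ) :
    ((!![(-1 : ℝ), p; 1, 1 + q])ᵀ * !![(1 : ℝ), 1/2; 1/2, 1] * !![(-1 : ℝ), p; 1, 1 + q] =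
        !![(1 : ℝ), 1/2; 1/2, 1] ∧
      (!![1 + r, 0; s, (-1 : ℝ)])ᵀ * !![(1 : ℝ), 1/2; 1/2, 1] * !![1 + r, 0; s, (-1 : ℝ)] =
        !![(1 : ℝ), 1/2; 1/2, 1]) ↔
    (q = p ∧ p * (p + 1) = 0 ∧ s = -1 - r / 2 ∧ r * (r + 2) = 0) := by
  simp only [← Matrix.ext_iff, Fin.forall_fin_two, Matrix.mul_apply, Fin.sum_univ_two,
    Matrix.transpose_apply, Matrix.cons_val', Matrix.cons_val_zero, Matrix.cons_val_one,
    Matrix.head_cons, Matrix.empty_val', Matrix.cons_val_fin_one, Matrix.head_fin_const,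
    Matrix.of_apply]
  constructor
  · rintro ⟨⟨⟨h1, h2⟩, h3, h4⟩, ⟨h5, h6⟩, h7, h8⟩
    have hq : q = p := by linarith
    have hs : s = -1 - r / 2 := by linarith
    subst hq hs
    exact ⟨rfl, by nlinarith [h4], rfl, by nlinarith [h5]⟩
  · rintro ⟨hq, hp, hs, hr⟩
    subst hq hs
    refine ⟨⟨⟨by norm_num, by nlinarith⟩, by nlinarith, by nlinarith⟩,
      ⟨by nlinarith, by nlinarith⟩, by nlinarith, by norm_num⟩
end

section
/- Classification of constant metric-compatible linear connections with only quadrangle torsion on (ℤ₄, {1,3}) with the regular-tetrahedron metric: let p, q, u, v be real numbers, 𝔤 = !![1, 1/2; 1/2, 1], V₁ = !![u, -1; q, 0], V₃ = !![0, p; -1, v] (rows/columns indexed by 1, 3 ∈ S). Then V₁ᵀ·𝔤·V₁ = 𝔤 and V₃ᵀ·𝔤·V₃ = 𝔤 hold if and only if ((q = -1 and u = 0) or (q = 1 and u = -1)) and ((p = -1 and v = 0) or (p = 1 and v = -1)); in particular there are exactly four such connections. -/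
open Matrix

/-- Classification of constant metric-compatible linear connections with only
quadrangle torsion on `(ℤ₄, {1,3})` with the regular-tetrahedron metric
`𝔤 = !![1, 1/2; 1/2, 1]`: the transport matrices `V₁ = !![u,-1;q,0]`,
`V₃ = !![0,p;-1,v]` are compatible with `𝔤` iff
`((q = -1 ∧ u = 0) ∨ (q = 1 ∧ u = -1))` and `((p = -1 ∧ v = 0) ∨ (p = 1 ∧ v = -1))`. -/
theorem z4_13_quadrangle_torsion_connections (p q u v : ℝ) :
    ((!![u, -1; q, (0 : ℝ)])ᵀ * !![(1 : ℝ), 1/2; 1/2, 1] * !![u, -1; q, (0 : ℝ)] =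
        !![(1 : ℝ), 1/2; 1/2, 1] ∧
      (!![(0 : ℝ), p; -1, v])ᵀ * !![(1 : ℝ), 1/2; 1/2, 1] * !![(0 : ℝ), p; -1, v] =
        !![(1 : ℝ), 1/2; 1/2, 1]) ↔
    (((q = -1 ∧ u = 0) ∨ (q = 1 ∧ u = -1)) ∧
      ((p = -1 ∧ v = 0) ∨ (p = 1 ∧ v = -1))) := by
  constructor
  · rintro ⟨h1, h2⟩
    have a00 := congrFun (congrFun h1 0) 0
    have a01 := congrFun (congrFun h1 0) 1
    have b11 := congrFun (congrFun h2 1) 1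
    have b01 := congrFun (congrFun h2 0) 1
    simp [Matrix.mul_apply, Fin.sum_univ_two, Matrix.vecHead, Matrix.transpose_apply] at a00 a01 b11 b01
    constructor
    · have hq : q = -1 - 2*u := by linarith
      subst hq
      have hu : u * (u + 1) = 0 := by linear_combination a00 / 3
      rcases mul_eq_zero.1 hu with h | h
      · exact Or.inl ⟨by rw [h]; ring, h⟩
      · have h' : u = -1 := by linarith
        exact Or.inr ⟨by rw [h']; ring, h'⟩
    · have hp : p = -1 - 2*v := by linarith
      subst hp
      have hv : v * (v + 1) = 0 := by linear_combination b11 / 3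
      rcases mul_eq_zero.1 hv with h | h
      · exact Or.inl ⟨by rw [h]; ring, h⟩
      · have h' : v = -1 := by linarith
        exact Or.inr ⟨by rw [h']; ring, h'⟩
  · rintro ⟨hqu | hqu, hpv | hpv⟩ <;> obtain ⟨h1, h2⟩ := hqu <;> obtain ⟨h3, h4⟩ := hpv <;>
      subst h1 <;> subst h2 <;> subst h3 <;> subst h4 <;>
      constructor <;> ext i j <;> fin_cases i <;> fin_cases j <;>
      simp [Matrix.mul_apply, Fin.sum_univ_two, Matrix.vecHead, Matrix.transpose_apply] <;> norm_num
end

section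
/- The connection coefficients of a flat Levi-Civita connection on (ℤ₄, {1,2}) realize a representation of ℤ₄ of order four: define φ : ℝ² → ℝ² (partially) by φ(p, q) = (−p/(1+p+q), −(2+p+q)/(1+p+q)). For all real p, q with 1 + p + q ≠ 0 and 1 + p ≠ 0, one has φ(φ(p, q)) = (−p/(1+p), q/(1+p)), and applying this formula twice returns (p, q); hence φ⁴(p, q) = (p, q) (all intermediate denominators being nonzero under these hypotheses). -/
/-- The map `φ(p,q) = (−p/(1+p+q), −(2+p+q)/(1+p+q))` governing the translation
behaviour of the connection coefficients of a flat Levi-Civita connection on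
`(ℤ₄, {1,2})`. -/
noncomputable def phiZ4 (x : ℝ × ℝ) : ℝ × ℝ :=
  (-x.1 / (1 + x.1 + x.2), -(2 + x.1 + x.2) / (1 + x.1 + x.2))

/-!
Both steps are direct computations with rational functions. The only point is to track the
denominators: `φ` sends `1 + p + q` to `-(1 + p) / (1 + p + q)`, so `φ ∘ φ` has denominator
`1 + p`, and `φ²` sends `1 + p` to `1 / (1 + p)`, which is what makes `φ²` an involution.
-/

section PhiZ4Sq

variable {K : Type*} [Field K]

def phiZ4Sq (x : K × K) : K × K :=
  (-x.1 / (1 + x.1), x.2 / (1 + x.1))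

theorem one_add_phiZ4Sq_fst {p : K} (hp : 1 + p ≠ 0) (q : K) :
    1 + (phiZ4Sq (p, q)).1 = 1 / (1 + p) := by
  simp only [phiZ4Sq]
  field_simp
  ring

theorem phiZ4Sq_phiZ4Sq {p : K} (hp : 1 + p ≠ 0) (q : K) :
    phiZ4Sq (phiZ4Sq (p, q)) = (p, q) := by
  have hden := one_add_phiZ4Sq_fst hp q
  simp only [phiZ4Sq] at hden ⊢
  rw [hden, Prod.mk.injEq]
  constructor <;> field_simp

end PhiZ4Sq

theorem one_add_phiZ4_fst_add_snd {p q : ℝ} (hpq : 1 + p + q ≠ 0) :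
    1 + (phiZ4 (p, q)).1 + (phiZ4 (p, q)).2 = -(1 + p) / (1 + p + q) := by
  simp only [phiZ4]
  field_simp
  ring

theorem phiZ4_phiZ4 {p q : ℝ} (hpq : 1 + p + q ≠ 0) (hp : 1 + p ≠ 0) :
    phiZ4 (phiZ4 (p, q)) = phiZ4Sq (p, q) := by
  have hden := one_add_phiZ4_fst_add_snd hpq
  simp only [phiZ4] at hden ⊢
  rw [hden, phiZ4Sq, Prod.mk.injEq]
  constructor
  · field_simp
  · field_simp
    ring

/-- The connection coefficients of a flat Levi-Civita connection on
`(ℤ₄, {1,2})` realize a representation of `ℤ₄` of order four: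
`φ²(p,q) = (−p/(1+p), q/(1+p))`, and applying this latter formula twice returns
`(p,q)`; hence `φ⁴(p,q) = (p,q)`. -/
theorem z4_12_connection_representation (p q : ℝ)
    (hpq : 1 + p + q ≠ 0) (hp : 1 + p ≠ 0) :
    phiZ4 (phiZ4 (p, q)) = (-p / (1 + p), q / (1 + p)) ∧
    (fun x : ℝ × ℝ => (-x.1 / (1 + x.1), x.2 / (1 + x.1)))
        ((fun x : ℝ × ℝ => (-x.1 / (1 + x.1), x.2 / (1 + x.1))) (p, q)) = (p, q) :=
  ⟨phiZ4_phiZ4 hpq hp, phiZ4Sq_phiZ4Sq hp q⟩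
end
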